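/- arXiv:1207.5884 — 5 statements merged into one kernel-verified Lean document; each statement's English description precedes it below -/
import Mathlib

section
/- Let C = F_1 + F_2 + … + F_k be a pseudo-simple minimal low degree unmixed ΣΠΣΠ(k) circuit of size s (s ≥ 2) over a sufficiently large (e.g. infinite) field F. If C computes the identically zero polynomial, then ‖F_i‖ ≤ s^(5k²) for each i ∈ [k]. -/
open MvPolynomial Finset

attribute [local instance 10] Classical.propDecidable

/-- Embed a univariate polynomial as a multivariate polynomial in the variable `x j`. -/
noncomputable def toMv {F : Type*} [CommSemiring F] {n : ℕ} (j : Fin n) (f : Polynomial F) :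
    MvPolynomial (Fin n) F :=
  Polynomial.aeval (X j) f

/-- The sparsity `‖P‖`: the number of monomials of `P` with nonzero coefficient. -/
def sparsity {F : Type*} [CommSemiring F] {n : ℕ} (P : MvPolynomial (Fin n) F) : ℕ :=
  P.support.card

/-- `‖P‖_A`: the number of distinct exponent vectors of monomials of `P` after setting
the exponents of the variables indexed by `A` to zero. -/
noncomputable def sparsityOn {F : Type*} [CommSemiring F] {n : ℕ} (A : Finset (Fin n))
    (P : MvPolynomial (Fin n) F) : ℕ :=
  (P.support.image fun m => Finsupp.filter (fun j => j ∉ A) m).card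

/-- Substitute `c` for the variable `x i`. -/
noncomputable def substAt {F : Type*} [CommSemiring F] {n : ℕ} (i : Fin n) (c : F)
    (P : MvPolynomial (Fin n) F) : MvPolynomial (Fin n) F :=
  aeval (fun j : Fin n => if j = i then MvPolynomial.C c else X j) P

/-- Substitute `a j` for `x j` for all `j < t` (for `t = 0` this is `P` itself). -/
noncomputable def substPrefix {F : Type*} [CommSemiring F] {n : ℕ} (t : ℕ) (a : Fin n → F)
    (P : MvPolynomial (Fin n) F) : MvPolynomial (Fin n) F :=
  aeval (fun j : Fin n => if (j : ℕ) < t then MvPolynomial.C (a j) else X j) P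

/-- The operator `D_{x i = c}(P, Q) = P·(Q|_{x i = c}) − (P|_{x i = c})·Q`. -/
noncomputable def Dop {F : Type*} [CommRing F] {n : ℕ} (i : Fin n) (c : F)
    (P Q : MvPolynomial (Fin n) F) : MvPolynomial (Fin n) F :=
  P * substAt i c Q - substAt i c P * Q

/-- `f` (a univariate polynomial, placed in the variable `x i`) is an indecomposable factor
of `Q`: `Q = f(x i) · H` with `H` not depending on `x i`. -/
def IsIndecompFactor {F : Type*} [CommSemiring F] {n : ℕ} (i : Fin n) (f : Polynomial F)
    (Q : MvPolynomial (Fin n) F) : Prop :=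
  ∃ H : MvPolynomial (Fin n) F, Q = toMv i f * H ∧ i ∉ H.vars

/-- The set `S 1 ∩ ⋯ ∩ S k` where `S i = {g i 1 (x 1), …, g i n (x n)}`. -/
noncomputable def commonFactors {F : Type*} [CommSemiring F] {n k : ℕ}
    (g : Fin k → Fin n → Polynomial F) : Finset (MvPolynomial (Fin n) F) :=
  (Finset.univ.image fun x : Fin k × Fin n => toMv x.2 (g x.1 x.2)).filter
    fun p => ∀ i : Fin k, ∃ j : Fin n, toMv j (g i j) = p

/-- The pseudo greatest common divisor: the product of the polynomials in `S 1 ∩ ⋯ ∩ S k`. -/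
noncomputable def pseudoGcd {F : Type*} [CommSemiring F] {n k : ℕ}
    (g : Fin k → Fin n → Polynomial F) : MvPolynomial (Fin n) F :=
  ∏ p ∈ commonFactors g, p

namespace SPA
open scoped Pointwise

variable {F : Type*} [Field F] {n : ℕ}

/-- pullback: kill all variables except `j`, sending `X j ↦ X`. -/
noncomputable def psi (j : Fin n) : MvPolynomial (Fin n) F →ₐ[F] Polynomial F :=
  MvPolynomial.aeval (fun l => if l = j then Polynomial.X else 1)

lemma aeval_toMv {A : Type*} [CommSemiring A] [Algebra F A] (u : Fin n → A) (j : Fin n)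
    (f : Polynomial F) : MvPolynomial.aeval u (toMv j f) = Polynomial.aeval (u j) f := by
  unfold toMv
  rw [← Polynomial.aeval_algHom_apply (MvPolynomial.aeval u) (X j) f, MvPolynomial.aeval_X]

lemma psi_toMv (j : Fin n) (f : Polynomial F) : psi j (toMv j f) = f := by
  unfold psi
  rw [aeval_toMv]
  simp [Polynomial.aeval_X_left_apply]

lemma toMv_ne_zero {j : Fin n} {f : Polynomial F} (hf : f ≠ 0) : toMv j f ≠ 0 := by
  intro h
  apply hf
  have := psi_toMv (F := F) j f
  rw [h, map_zero] at this
  exact this.symm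

lemma toMv_one (j : Fin n) : toMv j (1 : Polynomial F) = 1 := by
  unfold toMv; simp

lemma aeval_toMv_C (c : F) (f : Polynomial F) :
    Polynomial.aeval (MvPolynomial.C c : MvPolynomial (Fin n) F) f =
      MvPolynomial.C (f.eval c) := by
  rw [← MvPolynomial.algebraMap_eq, Polynomial.aeval_algebraMap_apply]
  rfl

lemma eval_toMv (c : Fin n → F) (j : Fin n) (f : Polynomial F) :
    MvPolynomial.aeval c (toMv j f) = f.eval (c j) := by
  rw [aeval_toMv]
  rfl

lemma toMv_eq_sum (j : Fin n) (f : Polynomial F) :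
    toMv j f = ∑ t ∈ f.support, MvPolynomial.monomial (Finsupp.single j t) (f.coeff t) := by
  unfold toMv
  rw [Polynomial.aeval_def, Polynomial.eval₂_eq_sum, Polynomial.sum_def]
  refine Finset.sum_congr rfl fun t _ => ?_
  rw [MvPolynomial.algebraMap_eq, MvPolynomial.C_mul_X_pow_eq_monomial]

lemma card_support_sum_le {ι : Type*} (s : Finset ι) (h : ι → MvPolynomial (Fin n) F) :
    (∑ t ∈ s, h t).support.card ≤ ∑ t ∈ s, (h t).support.card := by
  classical
  induction s using Finset.induction with
  | empty => simp
  | insert _ _ hne ih =>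
    rename_i a s'
    rw [Finset.sum_insert hne, Finset.sum_insert hne]
    calc ((h a) + ∑ t ∈ s', h t).support.card
        ≤ ((h a).support ∪ (∑ t ∈ s', h t).support).card :=
          Finset.card_le_card (MvPolynomial.support_add)
      _ ≤ (h a).support.card + (∑ t ∈ s', h t).support.card := Finset.card_union_le _ _
      _ ≤ (h a).support.card + ∑ t ∈ s', (h t).support.card := by omega

lemma card_support_toMv_le (j : Fin n) (f : Polynomial F) :
    (toMv j f).support.card ≤ f.support.card := by
  rw [toMv_eq_sum]
  calc (∑ t ∈ f.support, MvPolynomial.monomial (Finsupp.single j t) (f.coeff t)).support.card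
      ≤ ∑ t ∈ f.support, ((MvPolynomial.monomial (Finsupp.single j t) (f.coeff t)).support).card :=
        card_support_sum_le _ _
    _ ≤ ∑ t ∈ f.support, 1 := by
        refine Finset.sum_le_sum fun t ht => ?_
        classical
        rw [MvPolynomial.support_monomial]
        split <;> simp
    _ = f.support.card := by simp

lemma card_support_one : (support (1 : MvPolynomial (Fin n) F)).card ≤ 1 := by
  have : (1 : MvPolynomial (Fin n) F) = MvPolynomial.C 1 := by simp
  rw [this, MvPolynomial.C_apply]
  classical
  rw [MvPolynomial.support_monomial]
  split <;> simp

lemma card_support_mul (p q : MvPolynomial (Fin n) F) :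
    (p * q).support.card ≤ p.support.card * q.support.card := by
  calc (p * q).support.card ≤ (p.support + q.support).card :=
        Finset.card_le_card (MvPolynomial.support_mul p q)
    _ ≤ p.support.card * q.support.card := Finset.card_add_le

lemma card_support_prod_le {ι : Type*} (s : Finset ι) (h : ι → MvPolynomial (Fin n) F) :
    (∏ t ∈ s, h t).support.card ≤ ∏ t ∈ s, (h t).support.card := by
  classical
  induction s using Finset.induction with
  | empty => simpa using card_support_one
  | insert _ _ hne ih =>
    rename_i a s'
    rw [Finset.prod_insert hne, Finset.prod_insert hne]
    calc ((h a) * ∏ t ∈ s', h t).support.card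
        ≤ (h a).support.card * (∏ t ∈ s', h t).support.card := card_support_mul _ _
      _ ≤ (h a).support.card * ∏ t ∈ s', (h t).support.card :=
          Nat.mul_le_mul_left _ ih

/-! ### generic points and minimal parts -/

lemma exists_aeval_ne_zero [Infinite F] {P : MvPolynomial (Fin n) F} (hP : P ≠ 0) :
    ∃ c : Fin n → F, MvPolynomial.aeval c P ≠ 0 := by
  by_contra h
  push_neg at h
  apply hP
  apply MvPolynomial.funext (q := 0)
  intro x
  simpa using h x

lemma exists_polyeval_ne_zero [Infinite F] {f : Polynomial F} (hf : f ≠ 0) :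
    ∃ c : F, f.eval c ≠ 0 := by
  by_contra h
  push_neg at h
  exact hf (Polynomial.funext (q := 0) (by simpa using h))

/-- two distinct monic polynomials are not proportional as functions. -/
lemma det_pair [Infinite F] {u v : Polynomial F} (hu : u.Monic) (hv : v.Monic) (hne : u ≠ v) :
    ∃ c₁ c₂ : F, u.eval c₁ * v.eval c₂ ≠ u.eval c₂ * v.eval c₁ := by
  by_contra h
  push_neg at h
  obtain ⟨c₂, hc₂⟩ := exists_polyeval_ne_zero (hv.ne_zero)
  set lam : F := u.eval c₂ / v.eval c₂ with hlam
  have huv : u = Polynomial.C lam * v := by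
    apply Polynomial.funext
    intro r
    have := h r c₂
    simp only [Polynomial.eval_mul, Polynomial.eval_C]
    rw [hlam, div_mul_eq_mul_div, eq_div_iff hc₂]
    linear_combination this
  have hlamne : lam ≠ 0 := by
    intro h0
    rw [h0] at huv
    simp at huv
    exact hu.ne_zero huv
  have : lam = 1 := by
    have h1 : u.leadingCoeff = 1 := hu
    rw [huv] at h1
    rw [Polynomial.leadingCoeff_mul, Polynomial.leadingCoeff_C, hv.leadingCoeff] at h1
    simpa using h1
  rw [this] at huv
  simp at huv
  exact hne huv

/-- Extract a minimal vanishing sub-sum containing a distinguished index. -/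
lemma exists_minimal_part {M : Type*} [AddCommGroup M] (T : Finset ℕ) (v : ℕ → M)
    (hsum : ∑ i ∈ T, v i = 0) {i0 : ℕ} (hi0 : i0 ∈ T) (hv : v i0 ≠ 0) :
    ∃ A : Finset ℕ, A ⊆ T ∧ i0 ∈ A ∧ 2 ≤ A.card ∧ (∑ i ∈ A, v i = 0) ∧
      ∀ B ⊆ A, B.Nonempty → B ≠ A → ∑ i ∈ B, v i ≠ 0 := by
  classical
  set C : Finset (Finset ℕ) := T.powerset.filter (fun A => i0 ∈ A ∧ ∑ i ∈ A, v i = 0) with hC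
  have hTC : T ∈ C := by
    simp [hC, hi0, hsum]
  obtain ⟨A, hA, hmin⟩ := Finset.exists_min_image C Finset.card ⟨T, hTC⟩
  simp only [hC, Finset.mem_filter, Finset.mem_powerset] at hA
  obtain ⟨hAT, hi0A, hA0⟩ := hA
  refine ⟨A, hAT, hi0A, ?_, hA0, ?_⟩
  · by_contra hlt
    push_neg at hlt
    have h1 : 0 < A.card := Finset.card_pos.mpr ⟨i0, hi0A⟩
    have h2 : A.card = 1 := by omega
    obtain ⟨x, hx⟩ := Finset.card_eq_one.mp h2
    subst hx
    simp only [Finset.mem_singleton] at hi0A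
    subst hi0A
    simp only [Finset.sum_singleton] at hA0
    exact hv hA0
  · intro B hBA hBne hBneq hB0
    by_cases hiB : i0 ∈ B
    · have hBC : B ∈ C := by
        simp only [hC, Finset.mem_filter, Finset.mem_powerset]
        exact ⟨hBA.trans hAT, hiB, hB0⟩
      have := hmin B hBC
      have hlt : B.card < A.card := Finset.card_lt_card (Finset.ssubset_iff_subset_ne.mpr ⟨hBA, hBneq⟩)
      omega
    · have hsub : A \ B ∈ C := by
        simp only [hC, Finset.mem_filter, Finset.mem_powerset]
        refine ⟨(Finset.sdiff_subset).trans hAT, Finset.mem_sdiff.mpr ⟨hi0A, hiB⟩, ?_⟩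
        have := Finset.sum_sdiff (f := v) hBA
        rw [hB0, add_zero] at this
        rw [this, hA0]
      have := hmin _ hsub
      have hlt : (A \ B).card < A.card := by
        rw [Finset.card_sdiff_of_subset hBA]
        have : 0 < B.card := Finset.card_pos.mpr hBne
        have : B.card ≤ A.card := Finset.card_le_card hBA
        omega
      omega
/-! ### unmixed terms -/

/-- an unmixed term: coefficient times a product of univariate polynomials. -/
noncomputable def trm (β : F) (g : Fin n → Polynomial F) : MvPolynomial (Fin n) F :=
  MvPolynomial.C β * ∏ j, toMv j (g j)

lemma trm_ne_zero {β : F} {g : Fin n → Polynomial F} (hβ : β ≠ 0) (hg : ∀ j, g j ≠ 0) :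
    trm β g ≠ 0 := by
  apply mul_ne_zero
  · simpa using hβ
  · exact Finset.prod_ne_zero_iff.mpr fun j _ => toMv_ne_zero (hg j)

lemma C_mul_trm (a β : F) (g : Fin n → Polynomial F) :
    MvPolynomial.C a * trm β g = trm (a * β) g := by
  unfold trm
  rw [map_mul, mul_assoc]

lemma trm_sub (β₁ β₂ : F) (g : Fin n → Polynomial F) :
    trm β₁ g - trm β₂ g = trm (β₁ - β₂) g := by
  unfold trm
  rw [map_sub, sub_mul]

lemma trm_zero (g : Fin n → Polynomial F) : trm (0 : F) g = 0 := by
  unfold trm; simp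

lemma aeval_trm (c : Fin n → F) (β : F) (g : Fin n → Polynomial F) :
    MvPolynomial.aeval c (trm β g) = β * ∏ l, (g l).eval (c l) := by
  unfold trm
  rw [map_mul, map_prod, MvPolynomial.aeval_C]
  simp only [eval_toMv]
  rfl

lemma card_support_trm_le (β : F) (g : Fin n → Polynomial F) :
    (trm β g).support.card ≤ ∏ j, (g j).support.card := by
  unfold trm
  calc (MvPolynomial.C β * ∏ j, toMv j (g j)).support.card
      ≤ (MvPolynomial.C β).support.card * (∏ j, toMv j (g j)).support.card :=
        card_support_mul _ _
    _ ≤ 1 * ∏ j, (g j).support.card := by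
        apply Nat.mul_le_mul
        · rw [MvPolynomial.C_apply]
          classical
          rw [MvPolynomial.support_monomial]
          split <;> simp
        · exact le_trans (card_support_prod_le _ _)
            (Finset.prod_le_prod' fun j _ => card_support_toMv_le j (g j))
    _ = ∏ j, (g j).support.card := one_mul _

/-- substituting the variables outside `Con` by constants transforms an unmixed term
into another unmixed term. -/
lemma subst_trm (Con : Finset (Fin n)) (c : Fin n → F) (β : F) (g : Fin n → Polynomial F) :
    MvPolynomial.aeval
        (fun l => if l ∈ Con then (MvPolynomial.X l : MvPolynomial (Fin n) F)
          else MvPolynomial.C (c l)) (trm β g)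
      = trm (β * ∏ l ∈ Finset.univ \ Con, (g l).eval (c l))
          (fun l => if l ∈ Con then g l else 1) := by
  classical
  unfold trm
  rw [map_mul, map_prod, MvPolynomial.aeval_C]
  have hfac : ∀ l : Fin n,
      (MvPolynomial.aeval (fun l => if l ∈ Con then (MvPolynomial.X l : MvPolynomial (Fin n) F)
        else MvPolynomial.C (c l))) (toMv l (g l))
      = if l ∈ Con then toMv l (g l) else MvPolynomial.C ((g l).eval (c l)) := by
    intro l
    rw [aeval_toMv]
    by_cases hl : l ∈ Con
    · simp only [hl, if_true]
      rfl
    · simp only [hl, if_false]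
      exact aeval_toMv_C (c l) (g l)
  rw [Finset.prod_congr rfl (fun l _ => hfac l)]
  rw [← Finset.prod_sdiff (Finset.subset_univ Con)]
  have h1 : ∏ l ∈ Finset.univ \ Con,
      (if l ∈ Con then toMv l (g l) else MvPolynomial.C ((g l).eval (c l)))
      = MvPolynomial.C (∏ l ∈ Finset.univ \ Con, (g l).eval (c l)) := by
    rw [map_prod]
    refine Finset.prod_congr rfl fun l hl => ?_
    rw [if_neg (Finset.mem_sdiff.mp hl).2]
  have h2 : ∏ l ∈ Con, (if l ∈ Con then toMv l (g l) else MvPolynomial.C ((g l).eval (c l)))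
      = ∏ l ∈ Con, toMv l (g l) := Finset.prod_congr rfl fun l hl => if_pos hl
  rw [h1, h2, map_mul]
  have h3 : ∏ l : Fin n, toMv l (if l ∈ Con then g l else 1) = ∏ l ∈ Con, toMv l (g l) := by
    rw [← Finset.prod_sdiff (Finset.subset_univ Con)]
    have h4 : ∏ l ∈ Finset.univ \ Con, toMv l (if l ∈ Con then g l else 1) = 1 := by
      apply Finset.prod_eq_one
      intro l hl
      rw [if_neg (Finset.mem_sdiff.mp hl).2, toMv_one]
    have h5 : ∏ l ∈ Con, toMv l (if l ∈ Con then g l else 1) = ∏ l ∈ Con, toMv l (g l) :=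
      Finset.prod_congr rfl fun l hl => by rw [if_pos hl]
    rw [h4, h5, one_mul]
  rw [h3, MvPolynomial.algebraMap_eq]
  ring
/-! ### more helpers -/

lemma prod_le_union2 {A X Y : Finset (Fin n)} {f : Fin n → ℕ} (hf : ∀ j, 1 ≤ f j)
    (h : A ⊆ X ∪ Y) : ∏ j ∈ A, f j ≤ (∏ j ∈ X, f j) * ∏ j ∈ Y, f j := by
  classical
  calc ∏ j ∈ A, f j ≤ ∏ j ∈ X ∪ Y, f j :=
        Finset.prod_le_prod_of_subset_of_one_le' h (fun i _ _ => hf i)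
    _ = ∏ j ∈ X ∪ (Y \ X), f j := by rw [Finset.union_sdiff_self_eq_union]
    _ = (∏ j ∈ X, f j) * ∏ j ∈ Y \ X, f j := Finset.prod_union Finset.disjoint_sdiff
    _ ≤ (∏ j ∈ X, f j) * ∏ j ∈ Y, f j := by
        apply Nat.mul_le_mul_left
        exact Finset.prod_le_prod_of_subset_of_one_le' Finset.sdiff_subset (fun i _ _ => hf i)

lemma one_le_card_support {f : Polynomial F} (hf : f ≠ 0) : 1 ≤ f.support.card :=
  Finset.card_pos.mpr (Polynomial.support_nonempty.mpr hf)

lemma trm_ite_one (Con : Finset (Fin n)) (β : F) (g : Fin n → Polynomial F) :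
    trm β (fun l => if l ∈ Con then g l else 1)
      = MvPolynomial.C β * ∏ l ∈ Con, toMv l (g l) := by
  unfold trm
  congr 1
  rw [← Finset.prod_sdiff (Finset.subset_univ Con)]
  have h4 : ∏ l ∈ Finset.univ \ Con, toMv l (if l ∈ Con then g l else 1) = 1 := by
    apply Finset.prod_eq_one
    intro l hl
    rw [if_neg (Finset.mem_sdiff.mp hl).2, toMv_one]
  have h5 : ∏ l ∈ Con, toMv l (if l ∈ Con then g l else 1) = ∏ l ∈ Con, toMv l (g l) :=
    Finset.prod_congr rfl fun l hl => by rw [if_pos hl]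
  rw [h4, h5, one_mul]

lemma eval_trm_ite (c : Fin n → F) (Con : Finset (Fin n)) (β : F) (g : Fin n → Polynomial F) :
    MvPolynomial.aeval c (trm β (fun l => if l ∈ Con then 1 else g l))
      = β * ∏ l ∈ Finset.univ \ Con, (g l).eval (c l) := by
  rw [aeval_trm]
  congr 1
  rw [← Finset.prod_sdiff (Finset.subset_univ Con)]
  have h4 : ∏ l ∈ Con, ((if l ∈ Con then 1 else g l).eval (c l)) = 1 := by
    apply Finset.prod_eq_one
    intro l hl
    rw [if_pos hl, Polynomial.eval_one]
  have h5 : ∏ l ∈ Finset.univ \ Con, ((if l ∈ Con then 1 else g l).eval (c l))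
      = ∏ l ∈ Finset.univ \ Con, (g l).eval (c l) :=
    Finset.prod_congr rfl fun l hl => by rw [if_neg (Finset.mem_sdiff.mp hl).2]
  rw [h4, h5, mul_one]

/-- the hypotheses: coefficients nonzero, columns monic and `s`-sparse. -/
def GoodData (s : ℕ) (S : Finset ℕ) (β : ℕ → F) (g : ℕ → Fin n → Polynomial F) : Prop :=
  (∀ i ∈ S, β i ≠ 0) ∧ (∀ i ∈ S, ∀ j, (g i j).Monic) ∧ (∀ i ∈ S, ∀ j, (g i j).support.card ≤ s)

/-- a minimal vanishing unmixed identity. -/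
def IsMinId (S : Finset ℕ) (β : ℕ → F) (g : ℕ → Fin n → Polynomial F) : Prop :=
  (∑ i ∈ S, trm (β i) (g i) = 0) ∧
    ∀ B ⊆ S, B.Nonempty → B ≠ S → ∑ i ∈ B, trm (β i) (g i) ≠ 0

/-- the inductive claim: in a minimal vanishing unmixed identity with `k` terms, the product,
over the non-constant columns, of the sparsities of the factors of the `i0`-th term is at
most `s^((k-1)^2)`. -/
def ClaimAt (s k : ℕ) : Prop :=
  ∀ S : Finset ℕ, ∀ β : ℕ → F, ∀ g : ℕ → Fin n → Polynomial F,
    S.card = k → GoodData s S β g → IsMinId S β g → ∀ i0 ∈ S,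
      ∏ j ∈ Finset.univ.filter (fun j => ∃ i ∈ S, g i j ≠ g i0 j), (g i0 j).support.card
        ≤ s ^ ((k - 1) ^ 2)
lemma trm_const_one (x : F) :
    trm x (fun _ : Fin n => (1 : Polynomial F)) = MvPolynomial.C x := by
  unfold trm
  simp [toMv_one]

lemma card_support_one_poly : (1 : Polynomial F).support.card ≤ 1 := by
  have h : (1 : Polynomial F) = Polynomial.monomial 0 1 := by
    rw [Polynomial.monomial_zero_one]
  rw [h]
  exact le_trans (Finset.card_le_card (Polynomial.support_monomial' 0 1)) (by simp)

/-- The merging loop: columns that are constant on a sub-support `At` of the identity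
(containing `i0`) but non-constant globally have small total sparsity. -/
lemma loop_lemma [Infinite F] {s k : ℕ} (hs : 1 ≤ s)
    (IH : ∀ k', 2 ≤ k' → k' < k → ClaimAt (F := F) (n := n) s k')
    {S : Finset ℕ} {β : ℕ → F} {g : ℕ → Fin n → Polynomial F}
    (hcard : S.card = k) (hgood : GoodData s S β g) (hmin : IsMinId S β g)
    {i0 : ℕ} (hi0 : i0 ∈ S) :
    ∀ d : ℕ, ∀ At : Finset ℕ, At ⊆ S → i0 ∈ At → 2 ≤ At.card → (S \ At).card ≤ d →
      ∏ j ∈ Finset.univ.filter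
          (fun j => (∃ i ∈ S, g i j ≠ g i0 j) ∧ ∀ i ∈ At, g i j = g i0 j),
        (g i0 j).support.card ≤ s ^ (d ^ 2) := by
  classical
  obtain ⟨hβ, hmonic, hsize⟩ := hgood
  intro d
  induction d using Nat.strong_induction_on with
  | _ d IHd =>
  intro At hAtS hi0At hAt2 hAtd
  by_cases hTrkE : Finset.univ.filter
      (fun j => (∃ i ∈ S, g i j ≠ g i0 j) ∧ ∀ i ∈ At, g i j = g i0 j) = ∅
  · rw [hTrkE]
    simpa using Nat.one_le_pow (d ^ 2) s (by omega)
  obtain ⟨l₀, hl₀⟩ := Finset.nonempty_iff_ne_empty.mpr hTrkE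
  rw [Finset.mem_filter] at hl₀
  obtain ⟨-, ⟨iW, hiWS, hiWne⟩, hl₀con⟩ := hl₀
  have hiWAt : iW ∉ At := fun h => hiWne (hl₀con iW h)
  have hAtne : At ≠ S := fun h => hiWAt (h ▸ hiWS)
  have hd1 : 1 ≤ d := by
    have h1 : 0 < (S \ At).card :=
      Finset.card_pos.mpr ⟨iW, Finset.mem_sdiff.mpr ⟨hiWS, hiWAt⟩⟩
    omega
  set Con : Finset (Fin n) := Finset.univ.filter (fun j => ∀ i ∈ At, g i j = g i0 j) with hCon
  -- the non-Con part of the At terms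
  set ρ : MvPolynomial (Fin n) F :=
    ∑ i ∈ At, trm (β i) (fun l => if l ∈ Con then 1 else g i l) with hρ
  have hfact : ∑ i ∈ At, trm (β i) (g i) = (∏ l ∈ Con, toMv l (g i0 l)) * ρ := by
    rw [hρ, Finset.mul_sum]
    refine Finset.sum_congr rfl fun i hiAt => ?_
    unfold trm
    have e1 : ∏ l ∈ Con, toMv l (g i l) = ∏ l ∈ Con, toMv l (g i0 l) := by
      refine Finset.prod_congr rfl fun l hl => ?_
      rw [hCon, Finset.mem_filter] at hl
      rw [hl.2 i hiAt]
    have e2 : ∏ l ∈ Finset.univ \ Con, toMv l (if l ∈ Con then 1 else g i l)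
        = ∏ l ∈ Finset.univ \ Con, toMv l (g i l) :=
      Finset.prod_congr rfl fun l hl => by rw [if_neg (Finset.mem_sdiff.mp hl).2]
    have e3 : ∏ l ∈ Con, toMv l (if l ∈ Con then 1 else g i l) = 1 :=
      Finset.prod_eq_one fun l hl => by rw [if_pos hl, toMv_one]
    rw [← Finset.prod_sdiff (Finset.subset_univ Con) (f := fun l => toMv l (g i l)),
      ← Finset.prod_sdiff (Finset.subset_univ Con)
        (f := fun l => toMv l (if l ∈ Con then 1 else g i l)), e1, e2, e3, mul_one]
    ring
  have hρne : ρ ≠ 0 := by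
    intro h0
    apply hmin.2 At hAtS ⟨i0, hi0At⟩ hAtne
    rw [hfact, h0, mul_zero]
  -- a generic evaluation point
  have hQne : ρ * ∏ i ∈ S \ At, trm (β i) (fun l => if l ∈ Con then 1 else g i l) ≠ 0 := by
    refine mul_ne_zero hρne (Finset.prod_ne_zero_iff.mpr fun i hi => trm_ne_zero
      (hβ i (Finset.mem_sdiff.mp hi).1) (fun l => ?_))
    split
    · exact one_ne_zero
    · exact (hmonic i (Finset.mem_sdiff.mp hi).1 l).ne_zero
  obtain ⟨c, hc⟩ := exists_aeval_ne_zero hQne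
  rw [map_mul, map_prod] at hc
  have haρ : MvPolynomial.aeval c ρ ≠ 0 := left_ne_zero_of_mul hc
  set δ : ℕ → F := fun i => ∏ l ∈ Finset.univ \ Con, (g i l).eval (c l) with hδdef
  have hδ : ∀ i ∈ S \ At, β i * δ i ≠ 0 := by
    intro i hi
    have h2 := Finset.prod_ne_zero_iff.mp (right_ne_zero_of_mul hc) i hi
    rw [eval_trm_ite] at h2
    exact h2
  set r : F := ∑ i ∈ At, β i * δ i with hr
  have haρr : MvPolynomial.aeval c ρ = r := by
    rw [hρ, map_sum, hr]
    exact Finset.sum_congr rfl fun i hi => eval_trm_ite c Con (β i) (g i)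
  have hrne : r ≠ 0 := haρr ▸ haρ
  -- the substitution
  set φ := MvPolynomial.aeval (R := F)
    (fun l => if l ∈ Con then (MvPolynomial.X l : MvPolynomial (Fin n) F)
      else MvPolynomial.C (c l)) with hφ
  have hφρ : φ ρ = MvPolynomial.C r := by
    rw [hρ, map_sum, hr, map_sum]
    refine Finset.sum_congr rfl fun i hi => ?_
    rw [hφ, subst_trm]
    have e1 : (fun l => if l ∈ Con then (if l ∈ Con then (1:Polynomial F) else g i l) else 1)
        = fun _ => (1 : Polynomial F) := by
      funext l
      split <;> simp_all
    rw [e1, trm_const_one]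
    have e2 : β i * ∏ l ∈ Finset.univ \ Con, ((if l ∈ Con then 1 else g i l).eval (c l))
        = β i * δ i :=
      congrArg (β i * ·) (Finset.prod_congr rfl fun l hl => by
        rw [if_neg (Finset.mem_sdiff.mp hl).2])
    rw [e2]
  -- merged identity
  obtain ⟨star, hstar⟩ := Infinite.exists_notMem_finset S
  have hstarSA : star ∉ S \ At := fun h => hstar (Finset.mem_sdiff.mp h).1
  set βm : ℕ → F := fun i => if i = star then r else β i * δ i with hβm
  set gm : ℕ → Fin n → Polynomial F :=
    fun i l => if l ∈ Con then (if i = star then g i0 l else g i l) else 1 with hgm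
  set Sm : Finset ℕ := insert star (S \ At) with hSm
  have hgmstar : gm star = fun l => if l ∈ Con then g i0 l else 1 := by
    funext l
    rw [hgm]
    simp
  have hgmoth : ∀ i, i ≠ star → gm i = fun l => if l ∈ Con then g i l else 1 := by
    intro i hine
    funext l
    rw [hgm]
    simp [hine]
  have hφCon : φ (∏ l ∈ Con, toMv l (g i0 l)) = ∏ l ∈ Con, toMv l (g i0 l) := by
    rw [map_prod]
    refine Finset.prod_congr rfl fun l hl => ?_
    rw [hφ, aeval_toMv, if_pos hl]
    rfl
  have hsum_m : ∑ i ∈ Sm, trm (βm i) (gm i) = 0 := by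
    rw [hSm, Finset.sum_insert hstarSA]
    have hstterm : trm (βm star) (gm star) = φ (∑ i ∈ At, trm (β i) (g i)) := by
      rw [hfact, map_mul, hφρ, hφCon, hgmstar, trm_ite_one, hβm]
      simp only [eq_self_iff_true, if_true]
      ring
    have hother : ∀ i ∈ S \ At, trm (βm i) (gm i) = φ (trm (β i) (g i)) := by
      intro i hi
      have hine : i ≠ star := fun h => hstarSA (h ▸ hi)
      rw [hφ, subst_trm, hgmoth i hine, hβm]
      simp only [if_neg hine]
      rfl
    have hsplit : ∑ i ∈ At, trm (β i) (g i) + ∑ i ∈ S \ At, trm (β i) (g i)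
        = ∑ i ∈ S, trm (β i) (g i) := by
      rw [add_comm]
      exact Finset.sum_sdiff hAtS
    rw [hstterm, Finset.sum_congr rfl hother, ← map_sum, ← map_add, hsplit, hmin.1, map_zero]
  have htermne : ∀ i ∈ Sm, trm (βm i) (gm i) ≠ 0 := by
    intro i hi
    have higm : ∀ l, gm i l ≠ 0 := by
      intro l
      rw [hgm]
      dsimp only
      split
      · split
        · exact (hmonic i0 hi0 l).ne_zero
        · rename_i h1 h2
          have hiS : i ∈ S := by
            rcases Finset.mem_insert.mp (hSm ▸ hi) with h | h
            · exact absurd h h2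
            · exact (Finset.mem_sdiff.mp h).1
          exact (hmonic i hiS l).ne_zero
      · exact one_ne_zero
    refine trm_ne_zero ?_ higm
    rw [hβm]
    dsimp only
    split
    · exact hrne
    · rename_i h2
      have hiSA : i ∈ S \ At := by
        rcases Finset.mem_insert.mp (hSm ▸ hi) with h | h
        · exact absurd h h2
        · exact h
      exact hδ i hiSA
  obtain ⟨AP, hAPSm, hstarAP, hAP2, hAPsum, hAPmin⟩ :=
    exists_minimal_part Sm (fun i => trm (βm i) (gm i)) hsum_m
      (Finset.mem_insert_self star _) (htermne star (Finset.mem_insert_self star _))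
  have hSAcard : (S \ At).card = k - At.card := by rw [Finset.card_sdiff_of_subset hAtS, hcard]
  have hAtcardS : At.card ≤ k := hcard ▸ Finset.card_le_card hAtS
  have hSmcard : Sm.card = (S \ At).card + 1 := by
    rw [hSm, Finset.card_insert_of_notMem hstarSA]
  have hAPcard : AP.card ≤ (S \ At).card + 1 := hSmcard ▸ Finset.card_le_card hAPSm
  have hAPk : AP.card < k := by omega
  have hgoodm : GoodData s AP βm gm := by
    refine ⟨fun i hi => ?_, fun i hi l => ?_, fun i hi l => ?_⟩
    · exact (fun h => htermne i (hAPSm hi) (h ▸ trm_zero (gm i)))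
      -- βm i ≠ 0
    · rw [hgm]
      dsimp only
      split
      · split
        · exact hmonic i0 hi0 l
        · rename_i h1 h2
          have hiS : i ∈ S := by
            rcases Finset.mem_insert.mp (hSm ▸ hAPSm hi) with h | h
            · exact absurd h h2
            · exact (Finset.mem_sdiff.mp h).1
          exact hmonic i hiS l
      · exact Polynomial.monic_one
    · rw [hgm]
      dsimp only
      split
      · split
        · exact hsize i0 hi0 l
        · rename_i h1 h2
          have hiS : i ∈ S := by
            rcases Finset.mem_insert.mp (hSm ▸ hAPSm hi) with h | h
            · exact absurd h h2
            · exact (Finset.mem_sdiff.mp h).1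
          exact hsize i hiS l
      · exact le_trans card_support_one_poly hs
  have hclaim := IH AP.card hAP2 hAPk AP βm gm rfl hgoodm ⟨hAPsum, hAPmin⟩ star hstarAP
  -- enlarge At
  set At' : Finset ℕ := At ∪ AP.erase star with hAt'
  have hAPeS : AP.erase star ⊆ S \ At := by
    intro i hi
    obtain ⟨hine, hiAP⟩ := Finset.mem_erase.mp hi
    rcases Finset.mem_insert.mp (hSm ▸ hAPSm hiAP) with h | h
    · exact absurd h hine
    · exact h
  have hAt'S : At' ⊆ S := Finset.union_subset hAtS (hAPeS.trans Finset.sdiff_subset)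
  have hi0At' : i0 ∈ At' := Finset.mem_union_left _ hi0At
  have hAt'2 : 2 ≤ At'.card := le_trans hAt2 (Finset.card_le_card Finset.subset_union_left)
  have hdisj : Disjoint At (AP.erase star) :=
    Finset.disjoint_of_subset_right hAPeS Finset.disjoint_sdiff
  have hAt'card : At'.card = At.card + (AP.card - 1) := by
    rw [hAt', Finset.card_union_of_disjoint hdisj, Finset.card_erase_of_mem hstarAP]
  have hd'lt : d - (AP.card - 1) < d := by omega
  have hSAt'd : (S \ At').card ≤ d - (AP.card - 1) := by
    rw [Finset.card_sdiff_of_subset hAt'S, hcard, hAt'card]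
    omega
  have hloop' := IHd (d - (AP.card - 1)) hd'lt At' hAt'S hi0At' hAt'2 hSAt'd
  -- inclusion of tracked columns
  have hsub : Finset.univ.filter
      (fun j => (∃ i ∈ S, g i j ≠ g i0 j) ∧ ∀ i ∈ At, g i j = g i0 j)
      ⊆ (Finset.univ.filter
          (fun j => (∃ i ∈ S, g i j ≠ g i0 j) ∧ ∀ i ∈ At', g i j = g i0 j))
        ∪ (Finset.univ.filter (fun j => ∃ i ∈ AP, gm i j ≠ gm star j)) := by
    intro j hj
    obtain ⟨-, hnc, hconj⟩ := Finset.mem_filter.mp hj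
    have hjCon : j ∈ Con := by
      rw [hCon, Finset.mem_filter]
      exact ⟨Finset.mem_univ j, hconj⟩
    by_cases hc : ∀ i ∈ At', g i j = g i0 j
    · exact Finset.mem_union_left _ (Finset.mem_filter.mpr ⟨Finset.mem_univ j, hnc, hc⟩)
    · push_neg at hc
      obtain ⟨i, hiAt', hine⟩ := hc
      have hiAPe : i ∈ AP.erase star := by
        rcases Finset.mem_union.mp hiAt' with h | h
        · exact absurd (hconj i h) hine
        · exact h
      obtain ⟨hins, hiAP⟩ := Finset.mem_erase.mp hiAPe
      refine Finset.mem_union_right _ (Finset.mem_filter.mpr ⟨Finset.mem_univ j, i, hiAP, ?_⟩)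
      rw [hgm]
      dsimp only
      rw [if_pos hjCon, if_pos hjCon, if_neg hins, if_pos rfl]
      exact hine
  -- compare the two sparsity functions on Con
  have hgmcon : ∀ j ∈ Con, gm star j = g i0 j := by
    intro j hj
    rw [hgmstar]
    simp [hj]
  have hone : ∀ j, 1 ≤ (gm star j).support.card := by
    intro j
    apply one_le_card_support
    rw [hgmstar]
    dsimp only
    split
    · exact (hmonic i0 hi0 j).ne_zero
    · exact one_ne_zero
  calc ∏ j ∈ Finset.univ.filter
        (fun j => (∃ i ∈ S, g i j ≠ g i0 j) ∧ ∀ i ∈ At, g i j = g i0 j),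
        (g i0 j).support.card
      = ∏ j ∈ Finset.univ.filter
          (fun j => (∃ i ∈ S, g i j ≠ g i0 j) ∧ ∀ i ∈ At, g i j = g i0 j),
          (gm star j).support.card := by
        refine Finset.prod_congr rfl fun j hj => ?_
        obtain ⟨-, -, hconj⟩ := Finset.mem_filter.mp hj
        rw [hgmcon j (by rw [hCon, Finset.mem_filter]; exact ⟨Finset.mem_univ j, hconj⟩)]
    _ ≤ (∏ j ∈ Finset.univ.filter
          (fun j => (∃ i ∈ S, g i j ≠ g i0 j) ∧ ∀ i ∈ At', g i j = g i0 j),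
          (gm star j).support.card)
        * ∏ j ∈ Finset.univ.filter (fun j => ∃ i ∈ AP, gm i j ≠ gm star j),
          (gm star j).support.card := prod_le_union2 hone hsub
    _ ≤ (∏ j ∈ Finset.univ.filter
          (fun j => (∃ i ∈ S, g i j ≠ g i0 j) ∧ ∀ i ∈ At', g i j = g i0 j),
          (g i0 j).support.card)
        * ∏ j ∈ Finset.univ.filter (fun j => ∃ i ∈ AP, gm i j ≠ gm star j),
          (gm star j).support.card := by
        apply Nat.mul_le_mul_right
        apply le_of_eq
        refine Finset.prod_congr rfl fun j hj => ?_
        obtain ⟨-, -, hconj⟩ := Finset.mem_filter.mp hj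
        rw [hgmcon j (by
          rw [hCon, Finset.mem_filter]
          exact ⟨Finset.mem_univ j, fun i hiAt =>
            hconj i (Finset.mem_union_left _ hiAt)⟩)]
    _ ≤ s ^ ((d - (AP.card - 1)) ^ 2) * s ^ ((AP.card - 1) ^ 2) :=
        Nat.mul_le_mul hloop' hclaim
    _ ≤ s ^ (d ^ 2) := by
        rw [← pow_add]
        apply Nat.pow_le_pow_right (by omega)
        have h1 : 1 ≤ AP.card - 1 := by omega
        have h2 : AP.card - 1 ≤ d := by omega
        set x := AP.card - 1
        set y := d - x
        have hxy : y + x = d := by omega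
        calc y ^ 2 + x ^ 2 ≤ y ^ 2 + x ^ 2 + 2 * y * x := by omega
          _ = (y + x) ^ 2 := by ring
          _ = d ^ 2 := by rw [hxy]
lemma psi_C_mul_toMv (j : Fin n) (x : F) (f : Polynomial F) :
    psi j (MvPolynomial.C x * toMv j f) = Polynomial.C x * f := by
  rw [map_mul, psi_toMv]
  congr 1
  unfold psi
  rw [MvPolynomial.aeval_C]
  rfl

lemma monic_comb {u v : Polynomial F} (hu : u.Monic) (hv : v.Monic) {a b : F}
    (ha : a ≠ 0) (h : Polynomial.C a * u + Polynomial.C b * v = 0) : u = v := by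
  have hb : b ≠ 0 := by
    intro h0
    rw [h0] at h
    simp at h
    rcases h with h | h
    · exact ha h
    · exact hu.ne_zero h
  have h1 : Polynomial.C a * u = -(Polynomial.C b * v) := by linear_combination h
  have hdeg : u.natDegree = v.natDegree := by
    have := congrArg Polynomial.natDegree h1
    rwa [Polynomial.natDegree_C_mul ha, Polynomial.natDegree_neg,
      Polynomial.natDegree_C_mul hb] at this
  have hab : a = -b := by
    have := congrArg Polynomial.leadingCoeff h1
    rwa [Polynomial.leadingCoeff_neg, Polynomial.leadingCoeff_mul,
      Polynomial.leadingCoeff_mul, Polynomial.leadingCoeff_C, Polynomial.leadingCoeff_C,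
      hu.leadingCoeff, hv.leadingCoeff, mul_one, mul_one] at this
  have h2 : Polynomial.C b * (v - u) = 0 := by
    rw [hab] at h
    rw [map_neg] at h
    linear_combination h
  rcases mul_eq_zero.mp h2 with h3 | h3
  · exact absurd (by simpa using h3) hb
  · linear_combination -h3

theorem claimC [Infinite F] {s : ℕ} (hs : 1 ≤ s) :
    ∀ k, 2 ≤ k → ClaimAt (F := F) (n := n) s k := by
  intro k
  induction k using Nat.strong_induction_on with
  | _ k IHk =>
  intro hk2 S β g hcard hgood hmin i0 hi0
  classical
  obtain ⟨hβ, hmonic, hsize⟩ := hgood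
  by_cases hNC : Finset.univ.filter (fun j => ∃ i ∈ S, g i j ≠ g i0 j) = ∅
  · rw [hNC]
    simpa using Nat.one_le_pow (((k : ℕ) - 1) ^ 2) s (by omega)
  obtain ⟨j0, hj0⟩ := Finset.nonempty_iff_ne_empty.mpr hNC
  rw [Finset.mem_filter] at hj0
  obtain ⟨-, iX, hiXS, hiXne⟩ := hj0
  have hi0iX : iX ≠ i0 := fun h => hiXne (by rw [h])
  by_cases hk2' : k = 2
  -- ======================== base case k = 2 ========================
  · exfalso
    -- S = {i0, iX}
    have hpair : ({i0, iX} : Finset ℕ) = S := by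
      apply Finset.eq_of_subset_of_card_le
      · intro x hx
        rcases Finset.mem_insert.mp hx with h | h
        · exact h ▸ hi0
        · exact (Finset.mem_singleton.mp h) ▸ hiXS
      · rw [hcard, hk2', Finset.card_insert_of_notMem (by simpa using hi0iX.symm),
          Finset.card_singleton]
    -- generic point
    have hQne : trm (β i0) (fun l => if l ∈ ({j0} : Finset (Fin n)) then 1 else g i0 l)
        * trm (β iX) (fun l => if l ∈ ({j0} : Finset (Fin n)) then 1 else g iX l) ≠ 0 := by
      refine mul_ne_zero (trm_ne_zero (hβ i0 hi0) fun l => ?_)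
        (trm_ne_zero (hβ iX hiXS) fun l => ?_) <;>
      · split
        · exact one_ne_zero
        · first
          | exact (hmonic i0 hi0 l).ne_zero
          | exact (hmonic iX hiXS l).ne_zero
    obtain ⟨c, hc⟩ := exists_aeval_ne_zero hQne
    rw [map_mul] at hc
    have ha : β i0 * ∏ l ∈ Finset.univ \ ({j0} : Finset (Fin n)), (g i0 l).eval (c l) ≠ 0 := by
      have := left_ne_zero_of_mul hc
      rwa [eval_trm_ite] at this
    have hb : β iX * ∏ l ∈ Finset.univ \ ({j0} : Finset (Fin n)), (g iX l).eval (c l) ≠ 0 := by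
      have := right_ne_zero_of_mul hc
      rwa [eval_trm_ite] at this
    -- substitute all variables except j0
    have happ : ∀ i, (MvPolynomial.aeval (R := F)
        (fun l => if l ∈ ({j0} : Finset (Fin n)) then (MvPolynomial.X l : MvPolynomial (Fin n) F)
          else MvPolynomial.C (c l))) (trm (β i) (g i))
        = MvPolynomial.C (β i * ∏ l ∈ Finset.univ \ ({j0} : Finset (Fin n)), (g i l).eval (c l))
          * toMv j0 (g i j0) := by
      intro i
      rw [subst_trm, trm_ite_one, Finset.prod_singleton]
    have hzero2 : MvPolynomial.C (β i0 * ∏ l ∈ Finset.univ \ ({j0} : Finset (Fin n)),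
          (g i0 l).eval (c l)) * toMv j0 (g i0 j0)
        + MvPolynomial.C (β iX * ∏ l ∈ Finset.univ \ ({j0} : Finset (Fin n)),
          (g iX l).eval (c l)) * toMv j0 (g iX j0) = 0 := by
      rw [← happ, ← happ, ← map_add]
      have hsum2 : trm (β i0) (g i0) + trm (β iX) (g iX) = 0 := by
        have := hmin.1
        rw [← hpair, Finset.sum_pair hi0iX.symm] at this
        exact this
      rw [hsum2, map_zero]
    -- push down to polynomials
    have hpoly : Polynomial.C (β i0 * ∏ l ∈ Finset.univ \ ({j0} : Finset (Fin n)),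
          (g i0 l).eval (c l)) * (g i0 j0)
        + Polynomial.C (β iX * ∏ l ∈ Finset.univ \ ({j0} : Finset (Fin n)),
          (g iX l).eval (c l)) * (g iX j0) = 0 := by
      have := congrArg (psi j0) hzero2
      rwa [map_add, psi_C_mul_toMv, psi_C_mul_toMv, map_zero] at this
    exact hiXne ((monic_comb (hmonic i0 hi0 j0) (hmonic iX hiXS j0) ha hpoly).symm)
  -- ======================== inductive step ========================
  · have hk3 : 3 ≤ k := by omega
    -- the pair of generic scalars
    obtain ⟨c₁, c₂, hdet⟩ := det_pair (hmonic i0 hi0 j0) (hmonic iX hiXS j0)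
      (fun h => hiXne h.symm)
    set g1 : ℕ → Fin n → Polynomial F :=
      fun i l => if l ∈ Finset.univ.erase j0 then g i l else 1 with hg1
    have huj : Finset.univ \ Finset.univ.erase j0 = ({j0} : Finset (Fin n)) := by
      ext l
      simp [Finset.mem_erase]
    -- one-variable substitutions of the identity
    have hE : ∀ cc : F, ∑ i ∈ S, trm (β i * (g i j0).eval cc) (g1 i) = 0 := by
      intro cc
      have h0 := congrArg (MvPolynomial.aeval (R := F)
        (fun l => if l ∈ Finset.univ.erase j0 then (MvPolynomial.X l : MvPolynomial (Fin n) F)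
          else MvPolynomial.C cc)) hmin.1
      rw [map_sum, map_zero] at h0
      rw [← h0]
      refine Finset.sum_congr rfl fun i hi => ?_
      rw [subst_trm (c := fun _ => cc)]
      rw [hg1]
      congr 1
      rw [huj, Finset.prod_singleton]
    set e₁ : F := (g iX j0).eval c₁ with he₁
    set e₂ : F := (g iX j0).eval c₂ with he₂
    set γ : ℕ → F := fun i => β i * (e₂ * (g i j0).eval c₁ - e₁ * (g i j0).eval c₂) with hγ
    have hEcomb : ∑ i ∈ S, trm (γ i) (g1 i) = 0 := by
      calc ∑ i ∈ S, trm (γ i) (g1 i)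
          = ∑ i ∈ S, (MvPolynomial.C e₂ * trm (β i * (g i j0).eval c₁) (g1 i)
              - MvPolynomial.C e₁ * trm (β i * (g i j0).eval c₂) (g1 i)) := by
            refine Finset.sum_congr rfl fun i hi => ?_
            rw [C_mul_trm, C_mul_trm, trm_sub, hγ]
            congr 1
            ring
        _ = MvPolynomial.C e₂ * ∑ i ∈ S, trm (β i * (g i j0).eval c₁) (g1 i)
              - MvPolynomial.C e₁ * ∑ i ∈ S, trm (β i * (g i j0).eval c₂) (g1 i) := by
            rw [Finset.sum_sub_distrib, Finset.mul_sum, Finset.mul_sum]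
        _ = 0 := by rw [hE c₁, hE c₂, mul_zero, mul_zero, sub_zero]
    have hγi0 : γ i0 ≠ 0 := by
      rw [hγ]
      refine mul_ne_zero (hβ i0 hi0) (sub_ne_zero.mpr ?_)
      intro h
      apply hdet
      rw [he₁, he₂] at h
      linear_combination h
    have hγiX : γ iX = 0 := by
      rw [hγ, he₁, he₂]
      ring
    set S' : Finset ℕ := S.filter (fun i => γ i ≠ 0) with hS'
    have hS'sum : ∑ i ∈ S', trm (γ i) (g1 i) = 0 := by
      rw [hS']
      rw [Finset.sum_filter_of_ne (fun x hx htne => ?_)]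
      · exact hEcomb
      · intro h0
        exact htne (by rw [h0, trm_zero])
    have hi0S' : i0 ∈ S' := by
      rw [hS', Finset.mem_filter]
      exact ⟨hi0, hγi0⟩
    have hiXS' : iX ∉ S' := by
      rw [hS', Finset.mem_filter]
      intro h
      exact h.2 hγiX
    have hS'k : S'.card < k := by
      rw [← hcard]
      apply Finset.card_lt_card
      rw [Finset.ssubset_iff_of_subset (Finset.filter_subset _ _)]
      exact ⟨iX, hiXS, hiXS'⟩
    have hg1ne : ∀ i, i ∈ S → ∀ l, g1 i l ≠ 0 := by
      intro i hiS l
      rw [hg1]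
      dsimp only
      split
      · exact (hmonic i hiS l).ne_zero
      · exact one_ne_zero
    obtain ⟨A, hAS', hi0A, hA2, hAsum, hAmin⟩ :=
      exists_minimal_part S' (fun i => trm (γ i) (g1 i)) hS'sum hi0S'
        (trm_ne_zero hγi0 (hg1ne i0 hi0))
    have hAS : A ⊆ S := hAS'.trans (Finset.filter_subset _ _)
    have hAk : A.card < k := lt_of_le_of_lt (Finset.card_le_card hAS') hS'k
    have hgoodA : GoodData s A γ g1 := by
      refine ⟨fun i hi => (Finset.mem_filter.mp (hAS' hi)).2, fun i hi l => ?_,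
        fun i hi l => ?_⟩
      · rw [hg1]
        dsimp only
        split
        · exact hmonic i (hAS hi) l
        · exact Polynomial.monic_one
      · rw [hg1]
        dsimp only
        split
        · exact hsize i (hAS hi) l
        · exact le_trans card_support_one_poly hs
    have hclaimA := IHk A.card hAk hA2 A γ g1 rfl hgoodA ⟨hAsum, hAmin⟩ i0 hi0A
    have hloop := loop_lemma hs (fun k' h2 hlt => IHk k' hlt h2) hcard
      ⟨hβ, hmonic, hsize⟩ hmin hi0 ((S \ A).card) A hAS hi0A hA2 le_rfl
    -- inclusion of the nonconstant columns in the three pieces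
    have hincl : Finset.univ.filter (fun j => ∃ i ∈ S, g i j ≠ g i0 j)
        ⊆ ({j0} : Finset (Fin n)) ∪
          ((Finset.univ.filter (fun j => ∃ i ∈ A, g1 i j ≠ g1 i0 j))
            ∪ (Finset.univ.filter
              (fun j => (∃ i ∈ S, g i j ≠ g i0 j) ∧ ∀ i ∈ A, g i j = g i0 j))) := by
      intro j hj
      obtain ⟨-, hex⟩ := Finset.mem_filter.mp hj
      by_cases hjj0 : j = j0
      · exact Finset.mem_union_left _ (by simp [hjj0])
      · refine Finset.mem_union_right _ ?_
        by_cases hA : ∀ i ∈ A, g i j = g i0 j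
        · exact Finset.mem_union_right _
            (Finset.mem_filter.mpr ⟨Finset.mem_univ j, hex, hA⟩)
        · push_neg at hA
          obtain ⟨i, hiA, hne⟩ := hA
          refine Finset.mem_union_left _
            (Finset.mem_filter.mpr ⟨Finset.mem_univ j, i, hiA, ?_⟩)
          have hj' : j ∈ Finset.univ.erase j0 :=
            Finset.mem_erase.mpr ⟨hjj0, Finset.mem_univ j⟩
          rw [hg1]
          dsimp only
          rw [if_pos hj', if_pos hj']
          exact hne
    have honef : ∀ j, 1 ≤ (g i0 j).support.card :=
      fun j => one_le_card_support (hmonic i0 hi0 j).ne_zero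
    have hNCAeq : ∏ j ∈ Finset.univ.filter (fun j => ∃ i ∈ A, g1 i j ≠ g1 i0 j),
        (g i0 j).support.card
        = ∏ j ∈ Finset.univ.filter (fun j => ∃ i ∈ A, g1 i j ≠ g1 i0 j),
          (g1 i0 j).support.card := by
      refine Finset.prod_congr rfl fun j hj => ?_
      obtain ⟨-, i, hiA, hne⟩ := Finset.mem_filter.mp hj
      have hjj0 : j ≠ j0 := by
        intro h
        apply hne
        rw [hg1]
        dsimp only
        rw [h, if_neg (by simp), if_neg (by simp)]
      have hj' : j ∈ Finset.univ.erase j0 := Finset.mem_erase.mpr ⟨hjj0, Finset.mem_univ j⟩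
      rw [hg1]
      dsimp only
      rw [if_pos hj']
    -- put the three bounds together
    have hfj0 : (g i0 j0).support.card ≤ s ^ 1 := by
      rw [pow_one]
      exact hsize i0 hi0 j0
    have hSA : (S \ A).card = k - A.card := by rw [Finset.card_sdiff_of_subset hAS, hcard]
    calc ∏ j ∈ Finset.univ.filter (fun j => ∃ i ∈ S, g i j ≠ g i0 j), (g i0 j).support.card
        ≤ (∏ j ∈ ({j0} : Finset (Fin n)), (g i0 j).support.card)
          * ∏ j ∈ (Finset.univ.filter (fun j => ∃ i ∈ A, g1 i j ≠ g1 i0 j))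
              ∪ (Finset.univ.filter
                (fun j => (∃ i ∈ S, g i j ≠ g i0 j) ∧ ∀ i ∈ A, g i j = g i0 j)),
              (g i0 j).support.card := prod_le_union2 honef hincl
      _ ≤ (∏ j ∈ ({j0} : Finset (Fin n)), (g i0 j).support.card)
          * ((∏ j ∈ Finset.univ.filter (fun j => ∃ i ∈ A, g1 i j ≠ g1 i0 j),
              (g i0 j).support.card)
            * ∏ j ∈ Finset.univ.filter
                (fun j => (∃ i ∈ S, g i j ≠ g i0 j) ∧ ∀ i ∈ A, g i j = g i0 j),
                (g i0 j).support.card) := by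
          apply Nat.mul_le_mul_left
          exact prod_le_union2 honef (Finset.Subset.refl _)
      _ ≤ s ^ 1 * (s ^ ((A.card - 1) ^ 2) * s ^ ((S \ A).card ^ 2)) := by
          apply Nat.mul_le_mul
          · simpa using hfj0
          · apply Nat.mul_le_mul
            · rw [hNCAeq]
              exact hclaimA
            · exact hloop
      _ ≤ s ^ ((k - 1) ^ 2) := by
          rw [← pow_add, ← pow_add]
          apply Nat.pow_le_pow_right (by omega)
          rw [hSA]
          have h1 : 2 ≤ A.card := hA2
          have h2 : A.card < k := hAk
          set x := A.card - 1 with hx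
          set y := k - A.card with hy
          have hxy : x + y = k - 1 := by omega
          have hx1 : 1 ≤ x := by omega
          have hy1 : 1 ≤ y := by omega
          calc 1 + (x ^ 2 + y ^ 2) ≤ x ^ 2 + y ^ 2 + 2 * x * y := by nlinarith
            _ = (x + y) ^ 2 := by ring
            _ = (k - 1) ^ 2 := by rw [hxy]
end SPA

/-- Theorem 3.1. Let `C = F 0 + ⋯ + F (k-1)` be a pseudo-simple minimal
low degree unmixed ΣΠΣΠ(k) circuit of size `s ≥ 2` over a sufficiently large (infinite)
field. Each `F i = C (β i) * ∏ j, g i j (x j)` with `β i ≠ 0` and the `g i j` monic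
univariate `s`-sparse polynomials. (Following the paper, "low degree" is normalized to mean
that the computed polynomial has total degree at most `n`.) If `C` computes the identically
zero polynomial, then `‖F i‖ ≤ s ^ (5 k²)` for each `i`. -/


theorem sparsity_bound_of_pseudoSimple_minimal_unmixed_zero
    {F : Type*} [Field F] [Infinite F] {n k s : ℕ} (hs : 2 ≤ s)
    (β : Fin k → F) (hβ : ∀ i, β i ≠ 0)
    (g : Fin k → Fin n → Polynomial F)
    (hmonic : ∀ i j, (g i j).Monic)
    (hsize : ∀ i j, (g i j).support.card ≤ s)
    (Fp : Fin k → MvPolynomial (Fin n) F)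
    (hFp : ∀ i, Fp i = MvPolynomial.C (β i) * ∏ j : Fin n, toMv j (g i j))
    (hlow : (∑ i, Fp i).totalDegree ≤ n)
    (hmin : ∀ A : Finset (Fin k), A.Nonempty → A ≠ Finset.univ → ∑ i ∈ A, Fp i ≠ 0)
    (hps : pseudoGcd g = 1)
    (hzero : ∑ i, Fp i = 0) :
    ∀ i, sparsity (Fp i) ≤ s ^ (5 * k ^ 2) := by
  classical
  rcases Nat.lt_or_ge k 2 with hklt | hk2
  · -- k = 0 or k = 1
    interval_cases k
    · exact fun i => i.elim0
    · intro i
      have hF0 : Fp 0 = 0 := by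
        have := hzero
        rwa [Fin.sum_univ_one] at this
      have hi : i = 0 := Subsingleton.elim i 0
      rw [hi, hF0]
      show (0 : MvPolynomial (Fin n) F).support.card ≤ _
      simp
  · intro i
    have hs1 : 1 ≤ s := by omega
    -- ℕ-indexed data
    set Sn : Finset ℕ := Finset.univ.image (Fin.val : Fin k → ℕ) with hSn
    set βn : ℕ → F := fun m => if h : m < k then β ⟨m, h⟩ else 1 with hβn
    set gn : ℕ → Fin n → Polynomial F :=
      fun m => if h : m < k then g ⟨m, h⟩ else fun _ => 1 with hgn
    have hβn' : ∀ i' : Fin k, βn i'.val = β i' := by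
      intro i'
      rw [hβn]
      simp [i'.isLt]
    have hgn' : ∀ i' : Fin k, gn i'.val = g i' := by
      intro i'
      rw [hgn]
      simp [i'.isLt]
    have htrm : ∀ i' : Fin k, SPA.trm (βn i'.val) (gn i'.val) = Fp i' := by
      intro i'
      rw [hβn' i', hgn' i', hFp i']
      rfl
    have hsum_tr : ∀ B' : Finset (Fin k),
        ∑ m ∈ B'.image Fin.val, SPA.trm (βn m) (gn m) = ∑ i' ∈ B', Fp i' := by
      intro B'
      rw [Finset.sum_image (fun a _ b _ h => Fin.val_injective h)]
      exact Finset.sum_congr rfl fun i' _ => htrm i'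
    have hcardSn : Sn.card = k := by
      rw [hSn, Finset.card_image_of_injective _ Fin.val_injective, Finset.card_univ,
        Fintype.card_fin]
    have hmemSn : ∀ m ∈ Sn, m < k := by
      intro m hm
      rw [hSn] at hm
      obtain ⟨i', -, rfl⟩ := Finset.mem_image.mp hm
      exact i'.isLt
    have hgood : SPA.GoodData s Sn βn gn := by
      refine ⟨fun m hm => ?_, fun m hm j => ?_, fun m hm j => ?_⟩ <;>
      · obtain ⟨i', -, rfl⟩ := Finset.mem_image.mp (hSn ▸ hm)
        first
        | (rw [hβn' i']; exact hβ i')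
        | (rw [hgn' i']; first | exact hmonic i' j | exact hsize i' j)
    have hminid : SPA.IsMinId Sn βn gn := by
      constructor
      · have h1 : Sn = (Finset.univ : Finset (Fin k)).image Fin.val := hSn
        rw [h1, hsum_tr Finset.univ]
        exact hzero
      · intro B hBSn hBne hBneSn
        have hBlt : ∀ m ∈ B, m < k := fun m hm => hmemSn m (hBSn hm)
        set B' : Finset (Fin k) := B.attachFin hBlt with hB'
        have hB'img : B'.image Fin.val = B := by
          ext m
          simp only [Finset.mem_image]
          constructor
          · rintro ⟨a, ha, rfl⟩
            rw [hB'] at ha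
            exact (Finset.mem_attachFin hBlt).mp ha
          · intro hm
            exact ⟨⟨m, hBlt m hm⟩, by rw [hB']; exact (Finset.mem_attachFin hBlt).mpr hm, rfl⟩
        have hB'ne : B'.Nonempty := by
          obtain ⟨m, hm⟩ := hBne
          exact ⟨⟨m, hBlt m hm⟩, by rw [hB']; exact (Finset.mem_attachFin hBlt).mpr hm⟩
        have hB'neU : B' ≠ Finset.univ := by
          intro h
          apply hBneSn
          rw [← hB'img, h, hSn]
        have := hmin B' hB'ne hB'neU
        rw [← hB'img, hsum_tr B']
        exact this
    have hiSn : (i : ℕ) ∈ Sn := by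
      rw [hSn]
      exact Finset.mem_image.mpr ⟨i, Finset.mem_univ i, rfl⟩
    have hclaim := SPA.claimC (F := F) (n := n) hs1 k hk2 Sn βn gn hcardSn hgood hminid
      i.val hiSn
    -- constant columns are trivial by pseudo-simplicity
    have hconst1 : ∀ j : Fin n, (∀ m ∈ Sn, gn m j = gn i.val j) → g i j = 1 := by
      intro j hcol
      have hcol' : ∀ i' : Fin k, g i' j = g i j := by
        intro i'
        have h1 := hcol i'.val (by rw [hSn]; exact Finset.mem_image.mpr ⟨i', Finset.mem_univ i', rfl⟩)
        rwa [hgn' i', hgn' i] at h1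
      have hmem : toMv j (g i j) ∈ commonFactors g := by
        rw [commonFactors, Finset.mem_filter]
        constructor
        · exact Finset.mem_image.mpr ⟨(i, j), Finset.mem_univ _, rfl⟩
        · intro i'
          exact ⟨j, by rw [hcol' i']⟩
      have hdvd : toMv j (g i j) ∣ 1 := by
        rw [← hps]
        exact Finset.dvd_prod_of_mem _ hmem
      have hunit : IsUnit (toMv j (g i j)) := isUnit_of_dvd_one hdvd
      have hunit' : IsUnit (g i j) := by
        have := hunit.map (SPA.psi j)
        rwa [SPA.psi_toMv] at this
      obtain ⟨r, -, hrC⟩ := Polynomial.isUnit_iff.mp hunit'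
      have hmon := hmonic i j
      rw [← hrC] at hmon ⊢
      have : r = 1 := by
        have h2 : (Polynomial.C r).leadingCoeff = 1 := hmon
        rwa [Polynomial.leadingCoeff_C] at h2
      rw [this, map_one]
    -- assemble the sparsity bound
    have hstep1 : sparsity (Fp i) ≤ ∏ j, (g i j).support.card := by
      show (Fp i).support.card ≤ _
      rw [hFp i]
      exact SPA.card_support_trm_le (β i) (g i)
    have hsplit : ∏ j, (g i j).support.card
        = (∏ j ∈ Finset.univ.filter (fun j => ∃ m ∈ Sn, gn m j ≠ gn i.val j),
            (g i j).support.card)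
          * ∏ j ∈ Finset.univ.filter (fun j => ¬ ∃ m ∈ Sn, gn m j ≠ gn i.val j),
            (g i j).support.card :=
      (Finset.prod_filter_mul_prod_filter_not Finset.univ _ _).symm
    have hsecond : ∏ j ∈ Finset.univ.filter (fun j => ¬ ∃ m ∈ Sn, gn m j ≠ gn i.val j),
        (g i j).support.card = 1 := by
      apply Finset.prod_eq_one
      intro j hj
      obtain ⟨-, hj2⟩ := Finset.mem_filter.mp hj
      push_neg at hj2
      rw [hconst1 j hj2]
      have h1 : (1 : Polynomial F) = Polynomial.monomial 0 1 := by
        rw [Polynomial.monomial_zero_one]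
      rw [h1, Polynomial.support_monomial 0 one_ne_zero, Finset.card_singleton]
    have hfirst : ∏ j ∈ Finset.univ.filter (fun j => ∃ m ∈ Sn, gn m j ≠ gn i.val j),
        (g i j).support.card ≤ s ^ ((k - 1) ^ 2) := by
      have heq : ∏ j ∈ Finset.univ.filter (fun j => ∃ m ∈ Sn, gn m j ≠ gn i.val j),
          (g i j).support.card
          = ∏ j ∈ Finset.univ.filter (fun j => ∃ m ∈ Sn, gn m j ≠ gn i.val j),
            (gn i.val j).support.card := by
        refine Finset.prod_congr rfl fun j hj => ?_
        rw [hgn' i]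
      rw [heq]
      exact hclaim
    calc sparsity (Fp i) ≤ ∏ j, (g i j).support.card := hstep1
      _ = _ * _ := hsplit
      _ ≤ s ^ ((k - 1) ^ 2) * 1 := Nat.mul_le_mul hfirst (le_of_eq hsecond)
      _ = s ^ ((k - 1) ^ 2) := mul_one _
      _ ≤ s ^ (5 * k ^ 2) := by
        apply Nat.pow_le_pow_right (by omega)
        calc (k - 1) ^ 2 ≤ k ^ 2 := Nat.pow_le_pow_left (Nat.sub_le k 1) 2
          _ ≤ 5 * k ^ 2 := Nat.le_mul_of_pos_left _ (by norm_num)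
end

section
/- Let P ∈ F[x_1,…,x_n] be a polynomial over a field F, let k ≥ 2, and let A_1,…,A_k ⊆ [n] be pairwise disjoint sets of variable indices. Then ‖P‖^(k−1) ≤ ∏_{j=1}^k ‖P‖_{A_j}. -/
open MvPolynomial Finset

attribute [local instance 10] Classical.propDecidable

/-- AM-GM: `k * ∏ b ≤ ∑ b^k` for `k` numbers. -/
lemma amgm {ι : Type*} [Fintype ι] {k : ℕ} (hk : 0 < k) (hcard : Fintype.card ι = k)
    (b : ι → NNReal) : (k : NNReal) * ∏ i, b i ≤ ∑ i, (b i) ^ k := by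
  have hk0 : (k : NNReal) ≠ 0 := Nat.cast_ne_zero.mpr hk.ne'
  have hw : ∑ _i : ι, (k : NNReal)⁻¹ = 1 := by
    rw [Finset.sum_const, card_univ, hcard, nsmul_eq_mul, mul_inv_cancel₀ hk0]
  have h := NNReal.geom_mean_le_arith_mean_weighted Finset.univ
      (fun _ => (k : NNReal)⁻¹) (fun i => (b i) ^ k) hw
  have hL : ∀ i : ι, ((b i) ^ k) ^ (((k : NNReal)⁻¹ : NNReal) : ℝ) = b i := by
    intro i
    rw [← NNReal.rpow_natCast (b i) k, ← NNReal.rpow_mul]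
    push_cast
    rw [mul_inv_cancel₀ (by exact_mod_cast (Nat.cast_ne_zero.mpr hk.ne' : (k:ℝ) ≠ 0)), NNReal.rpow_one]
  rw [Finset.prod_congr rfl (fun i _ => hL i)] at h
  calc (k : NNReal) * ∏ i, b i ≤ (k : NNReal) * ∑ i, (k : NNReal)⁻¹ * (b i) ^ k :=
        mul_le_mul_right h _
    _ = ∑ i, (b i) ^ k := by
        rw [← Finset.mul_sum, ← mul_assoc]
        rw [mul_inv_cancel₀ hk0, one_mul]

/-- Power-form multi-Hölder: `(∑ t, ∏ j, f j t)^k ≤ ∏ j, ∑ t, (f j t)^k`. -/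
lemma multi_holder {α : Type*} (s : Finset α) (k : ℕ) (hk : 0 < k) [NeZero k]
    (f : ZMod k → α → NNReal) :
    (∑ t ∈ s, ∏ j, f j t) ^ k ≤ ∏ j : ZMod k, ∑ t ∈ s, (f j t) ^ k := by
  have hcard : Fintype.card (ZMod k) = k := ZMod.card k
  have hk0 : (k : NNReal) ≠ 0 := Nat.cast_ne_zero.mpr hk.ne'
  set T := Fintype.piFinset (fun _ : ZMod k => s) with hT
  have hL : (∑ t ∈ s, ∏ j : ZMod k, f j t) ^ k
      = ∑ v ∈ T, ∏ i : ZMod k, ∏ j : ZMod k, f j (v i) := by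
    have h1 : (∑ t ∈ s, ∏ j : ZMod k, f j t) ^ k
        = ∏ _i : ZMod k, ∑ t ∈ s, ∏ j : ZMod k, f j t := by
      rw [Finset.prod_const, Finset.card_univ, hcard]
    rw [h1, Finset.prod_univ_sum]
  have hR : (∏ j : ZMod k, ∑ t ∈ s, (f j t) ^ k)
      = ∑ v ∈ T, ∏ j : ZMod k, (f j (v j)) ^ k := by
    rw [Finset.prod_univ_sum]
  rw [hL, hR]
  have hkpos : (0 : NNReal) < (k : NNReal) := by positivity
  rw [← mul_le_mul_iff_right₀ hkpos]
  -- shift-reindexing: for each r, summing over shifted tuples is the same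
  have hshift : ∀ r : ZMod k,
      (∑ v ∈ T, ∏ j : ZMod k, (f j (v (j + r))) ^ k)
      = ∑ v ∈ T, ∏ j : ZMod k, (f j (v j)) ^ k := by
    intro r
    refine Finset.sum_nbij' (fun v => fun j => v (j + r)) (fun v => fun j => v (j - r)) ?_ ?_ ?_ ?_ ?_
    · intro v hv; simp only [hT, Fintype.mem_piFinset] at hv ⊢; intro j; exact hv _
    · intro v hv; simp only [hT, Fintype.mem_piFinset] at hv ⊢; intro j; exact hv _
    · intro v _; funext j; simp
    · intro v _; funext j; simp
    · intro v _; rfl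
  calc (k : NNReal) * ∑ v ∈ T, ∏ i : ZMod k, ∏ j : ZMod k, f j (v i)
      = ∑ v ∈ T, (k : NNReal) * ∏ i : ZMod k, ∏ j : ZMod k, f j (v i) := by
        rw [Finset.mul_sum]
    _ ≤ ∑ v ∈ T, ∑ r : ZMod k, (∏ j : ZMod k, f j (v (j + r))) ^ k := by
        refine Finset.sum_le_sum fun v _ => ?_
        have hsplit : (∏ i : ZMod k, ∏ j : ZMod k, f j (v i))
            = ∏ r : ZMod k, ∏ j : ZMod k, f j (v (j + r)) := by
          rw [← Finset.prod_product', ← Finset.prod_product']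
          exact Finset.prod_nbij' (fun p => (p.1 - p.2, p.2)) (fun p => (p.2 + p.1, p.2))
            (by simp) (by simp) (by intro p _; simp) (by intro p _; simp)
            (by intro p _; simp)
        rw [hsplit]
        exact amgm hk hcard _
    _ = ∑ r : ZMod k, ∑ v ∈ T, (∏ j : ZMod k, f j (v (j + r))) ^ k := Finset.sum_comm
    _ = ∑ r : ZMod k, ∑ v ∈ T, ∏ j : ZMod k, (f j (v j)) ^ k := by
        refine Finset.sum_congr rfl fun r _ => ?_
        rw [← hshift r]
        refine Finset.sum_congr rfl fun v _ => ?_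
        rw [Finset.prod_pow]
    _ = (k : NNReal) * ∑ v ∈ T, ∏ j : ZMod k, (f j (v j)) ^ k := by
        rw [Finset.sum_const, Finset.card_univ, hcard, nsmul_eq_mul]

noncomputable def pim {n : ℕ} (B : Finset (Fin n)) (m : Fin n →₀ ℕ) : Fin n →₀ ℕ :=
  Finsupp.filter (fun i => i ∉ B) m

noncomputable def rhom {n k : ℕ} (A : Fin (k+1) → Finset (Fin n)) (m : Fin n →₀ ℕ) :
    Fin n →₀ ℕ :=
  Finsupp.filter (fun i => i ∈ A (Fin.last k)) m

noncomputable def Fib {n k : ℕ} (A : Fin (k+1) → Finset (Fin n)) (S : Finset (Fin n →₀ ℕ))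
    (t : Fin n →₀ ℕ) : Finset (Fin n →₀ ℕ) :=
  S.filter (fun m => rhom A m = t)

lemma step_F1 {n k : ℕ} (A : Fin (k+1) → Finset (Fin n)) (S : Finset (Fin n →₀ ℕ)) :
    S.card = ∑ t ∈ S.image (rhom A), (Fib A S t).card :=
  Finset.card_eq_sum_card_fiberwise (fun x hx => Finset.mem_image_of_mem _ hx)

lemma step_F2 {n k : ℕ} (A : Fin (k+1) → Finset (Fin n)) (S : Finset (Fin n →₀ ℕ))
    (t : Fin n →₀ ℕ) :
    (Fib A S t).card ≤ (S.image (pim (A (Fin.last k)))).card := by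
  refine Finset.card_le_card_of_injOn (pim (A (Fin.last k))) ?_ ?_
  · intro m hm
    exact Finset.mem_image_of_mem _ (Finset.mem_of_mem_filter m hm)
  · intro m hm m' hm' h
    have ht : rhom A m = rhom A m' := by
      rw [(Finset.mem_filter.mp hm).2, (Finset.mem_filter.mp hm').2]
  -- m and m' agree on A_last coords (from ht) and on the rest (from h)
    ext i
    by_cases hi : i ∈ A (Fin.last k)
    · have h2 := congrArg (fun g => g i) ht
      simp only [rhom, Finsupp.filter_apply] at h2
      rwa [if_pos hi, if_pos hi] at h2
    · have h2 := congrArg (fun g => g i) h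
      simp only [pim, Finsupp.filter_apply] at h2
      rwa [if_pos hi, if_pos hi] at h2

lemma step_F3 {n k : ℕ} (A : Fin (k+1) → Finset (Fin n)) (S : Finset (Fin n →₀ ℕ))
    (hA : ∀ i j, i ≠ j → Disjoint (A i) (A j)) (j : Fin k) :
    ∑ t ∈ S.image (rhom A), ((Fib A S t).image (pim (A j.castSucc))).card
      ≤ (S.image (pim (A j.castSucc))).card := by
  have hdisj : Disjoint (A j.castSucc) (A (Fin.last k)) :=
    hA _ _ (Fin.castSucc_lt_last j).ne
  have key : ∀ m : Fin n →₀ ℕ, rhom A (pim (A j.castSucc) m) = rhom A m := by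
    intro m
    ext i
    simp only [rhom, pim, Finsupp.filter_apply]
    by_cases hi : i ∈ A (Fin.last k)
    · have hij : i ∉ A j.castSucc := Finset.disjoint_right.mp hdisj hi
      rw [if_pos hi, if_pos hi, if_pos hij]
    · rw [if_neg hi, if_neg hi]
  rw [← Finset.card_biUnion]
  · refine Finset.card_le_card ?_
    intro x hx
    rcases Finset.mem_biUnion.mp hx with ⟨t, _, hxt⟩
    rcases Finset.mem_image.mp hxt with ⟨m, hm, rfl⟩
    exact Finset.mem_image_of_mem _ (Finset.mem_of_mem_filter m hm)
  · intro t ht t' ht' htt'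
    rw [Function.onFun, Finset.disjoint_left]
    intro x hx hx'
    rcases Finset.mem_image.mp hx with ⟨m, hm, rfl⟩
    rcases Finset.mem_image.mp hx' with ⟨m', hm', he⟩
    apply htt'
    have h1 : rhom A m = t := (Finset.mem_filter.mp hm).2
    have h2 : rhom A m' = t' := (Finset.mem_filter.mp hm').2
    rw [← h1, ← h2, ← key m, ← key m', he]


lemma lw_base {n : ℕ} (S : Finset (Fin n →₀ ℕ)) (A : Fin 2 → Finset (Fin n))
    (hA : ∀ i j, i ≠ j → Disjoint (A i) (A j)) :
    S.card ^ (2 - 1) ≤ ∏ j, (S.image (pim (A j))).card := by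
  rw [pow_one]
  have hd : Disjoint (A 0) (A 1) := hA 0 1 (by decide)
  calc S.card ≤ ((S.image (pim (A 0))) ×ˢ (S.image (pim (A 1)))).card := by
        refine Finset.card_le_card_of_injOn (fun m => (pim (A 0) m, pim (A 1) m)) ?_ ?_
        · intro m hm
          exact Finset.mk_mem_product (Finset.mem_image_of_mem _ hm)
            (Finset.mem_image_of_mem _ hm)
        · intro m _ m' _ h
          have h0 := congrArg Prod.fst h
          have h1 := congrArg Prod.snd h
          simp only at h0 h1
          ext i
          by_cases hi : i ∈ A 0
          · have hi1 : i ∉ A 1 := Finset.disjoint_left.mp hd hi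
            have h2 := congrArg (fun g => g i) h1
            simp only [pim, Finsupp.filter_apply] at h2
            rwa [if_pos hi1, if_pos hi1] at h2
          · have h2 := congrArg (fun g => g i) h0
            simp only [pim, Finsupp.filter_apply] at h2
            rwa [if_pos hi, if_pos hi] at h2
    _ = _ := by rw [Finset.card_product, Fin.prod_univ_two]

/-- Discrete Loomis–Whitney / Shearer for disjoint blocks. -/
lemma loomis_whitney {n : ℕ} : ∀ (k : ℕ), 2 ≤ k →
    ∀ (S : Finset (Fin n →₀ ℕ)) (A : Fin k → Finset (Fin n)),
    (∀ i j, i ≠ j → Disjoint (A i) (A j)) →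
    S.card ^ (k - 1) ≤ ∏ j, (S.image (pim (A j))).card := by
  intro k hk
  induction k, hk using Nat.le_induction with
  | base => exact lw_base
  | succ k hk2 IH =>
    intro S A hA
    haveI : NeZero k := ⟨by omega⟩
    have hkpos : 0 < k := by omega
    -- notation
    set V := S.image (rhom A) with hV
    have hsub : k + 1 - 1 = k := by omega
    rw [hsub]
    -- cast to NNReal
    rw [← Nat.cast_le (α := NNReal)]
    push_cast
    set a : (Fin n →₀ ℕ) → NNReal := fun t => ((Fib A S t).card : NNReal) with ha
    set c : Fin k → (Fin n →₀ ℕ) → NNReal :=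
      fun j t => (((Fib A S t).image (pim (A j.castSucc))).card : NNReal) with hc
    set N : Fin (k+1) → NNReal := fun j => ((S.image (pim (A j))).card : NNReal) with hN
    have hSa : (S.card : NNReal) = ∑ t ∈ V, a t := by
      rw [step_F1 A S]; push_cast; rfl
    -- the equivalence and the Hölder functions
    set e : ZMod k ≃ Fin k := Fintype.equivFinOfCardEq (ZMod.card k) with he
    set f : ZMod k → (Fin n →₀ ℕ) → NNReal :=
      fun j' t => (c (e j') t) ^ ((k : ℝ)⁻¹) with hf
    have hkR : ((k : ℝ)) ≠ 0 := Nat.cast_ne_zero.mpr hkpos.ne'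
    have hroot : ∀ x : NNReal, (x ^ k) ^ ((k : ℝ)⁻¹) = x := by
      intro x
      rw [← NNReal.rpow_natCast x k, ← NNReal.rpow_mul, mul_inv_cancel₀ hkR, NNReal.rpow_one]
    have hpowk : ∀ x : NNReal, (x ^ ((k : ℝ)⁻¹)) ^ k = x := by
      intro x
      rw [← NNReal.rpow_natCast (x ^ ((k : ℝ)⁻¹)) k, ← NNReal.rpow_mul,
        inv_mul_cancel₀ hkR, NNReal.rpow_one]
    -- pointwise bound
    have hpt : ∀ t ∈ V, a t ≤ (N (Fin.last k)) ^ ((k : ℝ)⁻¹) * ∏ j' : ZMod k, f j' t := by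
      intro t _
      have hak : a t ^ k ≤ (∏ j : Fin k, c j t) * N (Fin.last k) := by
        have hk1 : k - 1 + 1 = k := by omega
        have h1 : a t ^ (k - 1) ≤ ∏ j : Fin k, c j t := by
          have := IH (Fib A S t) (fun j => A j.castSucc)
            (fun i j hij => hA _ _ (fun hcon => hij (Fin.castSucc_injective _ hcon)))
          rw [← Nat.cast_le (α := NNReal)] at this
          push_cast at this
          exact this
        have h2 : a t ≤ N (Fin.last k) := by
          have := step_F2 A S t
          rw [← Nat.cast_le (α := NNReal)] at this
          exact this
        calc a t ^ k = a t ^ (k - 1) * a t := by rw [← pow_succ, hk1]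
          _ ≤ (∏ j : Fin k, c j t) * N (Fin.last k) := mul_le_mul' h1 h2
      have := NNReal.rpow_le_rpow (z := (k : ℝ)⁻¹) hak (by positivity)
      rw [hroot] at this
      calc a t ≤ ((∏ j : Fin k, c j t) * N (Fin.last k)) ^ ((k : ℝ)⁻¹) := this
        _ = (N (Fin.last k)) ^ ((k : ℝ)⁻¹) * ∏ j' : ZMod k, f j' t := by
            rw [NNReal.mul_rpow, mul_comm]
            congr 1
            rw [← NNReal.finset_prod_rpow]
            exact (Equiv.prod_comp e (fun j => (c j t) ^ ((k:ℝ)⁻¹))).symm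
    -- sum up and apply Hölder
    have hsum : (S.card : NNReal) ≤
        (N (Fin.last k)) ^ ((k : ℝ)⁻¹) * ∑ t ∈ V, ∏ j' : ZMod k, f j' t := by
      rw [hSa, Finset.mul_sum]
      exact Finset.sum_le_sum hpt
    have hmain : ((S.card : NNReal)) ^ k ≤ N (Fin.last k) * ∏ j : Fin k, N j.castSucc := by
      calc ((S.card : NNReal)) ^ k
          ≤ ((N (Fin.last k)) ^ ((k : ℝ)⁻¹) * ∑ t ∈ V, ∏ j' : ZMod k, f j' t) ^ k :=
            pow_le_pow_left' hsum k
        _ = N (Fin.last k) * (∑ t ∈ V, ∏ j' : ZMod k, f j' t) ^ k := by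
            rw [mul_pow, hpowk]
        _ ≤ N (Fin.last k) * ∏ j' : ZMod k, ∑ t ∈ V, (f j' t) ^ k :=
            mul_le_mul_right (multi_holder V k hkpos f) _
        _ ≤ N (Fin.last k) * ∏ j : Fin k, N j.castSucc := by
            refine mul_le_mul_right ?_ _
            calc ∏ j' : ZMod k, ∑ t ∈ V, (f j' t) ^ k
                = ∏ j' : ZMod k, ∑ t ∈ V, c (e j') t := by
                  refine Finset.prod_congr rfl fun j' _ => Finset.sum_congr rfl fun t _ => ?_
                  rw [hf, hpowk]
              _ ≤ ∏ j' : ZMod k, N ((e j').castSucc) := by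
                  refine Finset.prod_le_prod' fun j' _ => ?_
                  have := step_F3 A S hA (e j')
                  rw [← Nat.cast_le (α := NNReal)] at this
                  push_cast at this
                  exact this
              _ = ∏ j : Fin k, N j.castSucc :=
                  Equiv.prod_comp e (fun j => N j.castSucc)
    calc ((S.card : NNReal)) ^ k ≤ N (Fin.last k) * ∏ j : Fin k, N j.castSucc := hmain
      _ = ∏ j : Fin (k+1), N j := by rw [Fin.prod_univ_castSucc, mul_comm]

/-- Corollary of Shearer's Lemma. For pairwise disjoint sets
`A 1, …, A k ⊆ [n]` with `k ≥ 2`, `‖P‖^(k−1) ≤ ∏ j, ‖P‖_{A j}`. -/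
theorem sparsity_pow_le_prod_sparsityOn
    {F : Type*} [Field F] {n k : ℕ} (hk : 2 ≤ k)
    (P : MvPolynomial (Fin n) F)
    (A : Fin k → Finset (Fin n))
    (hA : ∀ i j, i ≠ j → Disjoint (A i) (A j)) :
    sparsity P ^ (k - 1) ≤ ∏ j, sparsityOn (A j) P :=
  loomis_whitney k hk P.support A hA
end

section
/- Let P be a nonconstant univariate polynomial depending only on the variable x_i, let Q ∈ F[x_1,…,x_n] be a polynomial, and let c ∈ F with P(c) ≠ 0. Then D_{x_i=c}(P,Q) ≡ 0 if and only if Q = P·H for some polynomial H ∈ F[x_1,…,x_n] that does not depend on x_i (i.e., P is an indecomposable factor of Q). -/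
open MvPolynomial Finset

attribute [local instance 10] Classical.propDecidable

section Aux
variable {F : Type*} [Field F] {n : ℕ}

lemma substAt_mul (i : Fin n) (c : F) (P Q : MvPolynomial (Fin n) F) :
    substAt i c (P * Q) = substAt i c P * substAt i c Q := by
  simp [substAt, map_mul]

lemma substAt_toMv (i : Fin n) (c : F) (p : Polynomial F) :
    substAt i c (toMv i p) = MvPolynomial.C (p.eval c) := by
  unfold substAt toMv
  rw [← Polynomial.aeval_algHom_apply]
  have h1 : (MvPolynomial.aeval (R := F) fun j : Fin n => if j = i then (MvPolynomial.C c : MvPolynomial (Fin n) F) else MvPolynomial.X j) (MvPolynomial.X i) = MvPolynomial.C c := by simp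
  rw [h1, show (MvPolynomial.C c : MvPolynomial (Fin n) F) = algebraMap F _ c from rfl,
    Polynomial.aeval_algebraMap_apply]
  simp [MvPolynomial.algebraMap_eq]

lemma substAt_notMem_vars (i : Fin n) (c : F) (Q : MvPolynomial (Fin n) F) :
    i ∉ (substAt i c Q).vars := by
  induction Q using MvPolynomial.induction_on with
  | C a => simp [substAt]
  | add P Q hP hQ =>
      intro h
      have := MvPolynomial.vars_add_subset _ _ (by simpa [substAt, map_add] using h)
      simp only [Finset.mem_union] at this
      tauto
  | mul_X P j hP =>
      intro h
      rw [substAt_mul] at h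
      have := MvPolynomial.vars_mul _ _ h
      simp only [Finset.mem_union] at this
      rcases this with h1 | h1
      · exact hP h1
      · by_cases hj : j = i
        · simp [substAt, hj] at h1
        · simp [substAt, hj, MvPolynomial.vars_X] at h1
          exact hj h1.symm

lemma substAt_eq_self_of_notMem_vars (i : Fin n) (c : F) (H : MvPolynomial (Fin n) F)
    (h : i ∉ H.vars) : substAt i c H = H := by
  unfold substAt
  conv_rhs => rw [← MvPolynomial.aeval_X_left_apply (R := F) H]
  simp only [MvPolynomial.aeval_def]
  refine MvPolynomial.eval₂Hom_congr' rfl (fun j hj _ => ?_) rfl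
  have : j ≠ i := fun e => h (e ▸ hj)
  simp [this]

end Aux

/-- Lemma 2.6. Let `p` be a nonconstant univariate polynomial placed in
the variable `x i`, let `Q` be any polynomial and let `c` be a point with `p(c) ≠ 0`.
Then `D_{x i = c}(p, Q) ≡ 0` iff `p` is an indecomposable factor of `Q`. -/
theorem Dop_eq_zero_iff_isIndecompFactor
    {F : Type*} [Field F] {n : ℕ} (i : Fin n)
    (p : Polynomial F) (hp : p.natDegree ≠ 0)
    (Q : MvPolynomial (Fin n) F)
    (c : F) (hc : p.eval c ≠ 0) :
    Dop i c (toMv i p) Q = 0 ↔ IsIndecompFactor i p Q := by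
  have hsP := substAt_toMv i c p
  constructor
  · intro h
    unfold Dop at h
    rw [sub_eq_zero, hsP] at h
    refine ⟨MvPolynomial.C (p.eval c)⁻¹ * substAt i c Q, ?_, ?_⟩
    · have h2 : MvPolynomial.C (p.eval c)⁻¹ * (MvPolynomial.C (p.eval c) * Q) = Q := by
        rw [← mul_assoc, ← MvPolynomial.C_mul, inv_mul_cancel₀ hc, MvPolynomial.C_1, one_mul]
      calc Q = MvPolynomial.C (p.eval c)⁻¹ * (MvPolynomial.C (p.eval c) * Q) := h2.symm
        _ = MvPolynomial.C (p.eval c)⁻¹ * (toMv i p * substAt i c Q) := by rw [h]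
        _ = toMv i p * (MvPolynomial.C (p.eval c)⁻¹ * substAt i c Q) := by ring
    · rw [MvPolynomial.vars_C_mul _ (inv_ne_zero hc)]
      exact substAt_notMem_vars i c Q
  · rintro ⟨H, rfl, hH⟩
    unfold Dop
    rw [substAt_mul, hsP, substAt_eq_self_of_notMem_vars i c H hH]
    ring
end

section
/- Let C = F_1 + … + F_k (k ≥ 3) be a low degree unmixed ΣΠΣΠ(k) circuit over a field F computing the identically zero polynomial, and let f be a nonconstant univariate polynomial such that f is an indecomposable factor of F_k but f is not an indecomposable factor of F_1. Then there exists a subset B ⊆ [k] with 1 ∈ B, k ∉ B, and 2 ≤ |B| ≤ k−1 such that the subcircuit C_B := ∑_{i∈B} F_i is f-minimal and f is an indecomposable factor of C_B. -/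
open MvPolynomial Finset

attribute [local instance 10] Classical.propDecidable

lemma indecomp_sub {F : Type*} [CommRing F] {n : ℕ} {d : Fin n} {f : Polynomial F}
    {P Q : MvPolynomial (Fin n) F} (hP : IsIndecompFactor d f P)
    (hQ : IsIndecompFactor d f Q) : IsIndecompFactor d f (P - Q) := by
  obtain ⟨H, rfl, hH⟩ := hP
  obtain ⟨H', rfl, hH'⟩ := hQ
  refine ⟨H - H', by ring, fun h => ?_⟩
  rcases Finset.mem_union.mp (MvPolynomial.vars_sub_subset _ h) with h | h
  exacts [hH h, hH' h]

lemma indecomp_zero {F : Type*} [CommSemiring F] {n : ℕ} {d : Fin n} {f : Polynomial F} :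
    IsIndecompFactor d f (0 : MvPolynomial (Fin n) F) :=
  ⟨0, by ring, by simp⟩

lemma exists_min_aux {F : Type*} [Field F] {n k : ℕ} [NeZero k]
    (Fp : Fin k → MvPolynomial (Fin n) F) (d : Fin n) (f : Polynomial F)
    (hf1 : ¬ IsIndecompFactor d f (Fp 0)) :
    ∀ U : Finset (Fin k), (0 : Fin k) ∈ U → IsIndecompFactor d f (∑ i ∈ U, Fp i) →
    ∃ B ⊆ U, (0 : Fin k) ∈ B ∧ 2 ≤ B.card ∧
      (∀ A : Finset (Fin k), A.Nonempty → A ⊂ B →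
        ¬ IsIndecompFactor d f (∑ i ∈ A, Fp i)) ∧
      IsIndecompFactor d f (∑ i ∈ B, Fp i) := by
  intro U
  induction U using Finset.strongInduction with
  | _ U ih =>
    intro h0 hU
    by_cases hmin : ∀ A : Finset (Fin k), A.Nonempty → A ⊂ U →
        ¬ IsIndecompFactor d f (∑ i ∈ A, Fp i)
    · refine ⟨U, Finset.Subset.refl U, h0, ?_, hmin, hU⟩
      by_contra hc
      have hpos : 0 < U.card := Finset.card_pos.mpr ⟨0, h0⟩
      have h1 : U.card = 1 := by omega
      obtain ⟨a, ha⟩ := Finset.card_eq_one.mp h1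
      subst ha
      have : a = (0 : Fin k) := by symm; simpa using h0
      subst this
      simp only [Finset.sum_singleton] at hU
      exact hf1 hU
    · push_neg at hmin
      obtain ⟨A, hAne, hAU, hA⟩ := hmin
      by_cases h0A : (0 : Fin k) ∈ A
      · obtain ⟨B, hBA, rest⟩ := ih A hAU h0A hA
        exact ⟨B, hBA.trans hAU.subset, rest⟩
      · have hsub : U \ A ⊂ U := by
          refine Finset.ssubset_iff_of_subset Finset.sdiff_subset |>.mpr ?_
          obtain ⟨a, haA⟩ := hAne
          exact ⟨a, hAU.subset haA, by simp [haA]⟩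
        have h0' : (0 : Fin k) ∈ U \ A := Finset.mem_sdiff.mpr ⟨h0, h0A⟩
        have hsum : ∑ i ∈ U \ A, Fp i = (∑ i ∈ U, Fp i) - ∑ i ∈ A, Fp i :=
          Finset.sum_sdiff_eq_sub hAU.subset
        have hUA : IsIndecompFactor d f (∑ i ∈ U \ A, Fp i) := by
          rw [hsum]; exact indecomp_sub hU hA
        obtain ⟨B, hB, rest⟩ := ih (U \ A) hsub h0' hUA
        exact ⟨B, hB.trans Finset.sdiff_subset, rest⟩

/-- Claim 3.1.2. Let `C = F 0 + ⋯ + F (k-1)` (`k ≥ 3`, index `0`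
playing the role of `F 1` and index `k-1` the role of `F k`) be a low degree unmixed
ΣΠΣΠ(k) circuit computing the zero polynomial, and let `f` be a nonconstant univariate
polynomial (in the variable `x d`) that is an indecomposable factor of `F k` but not of
`F 1`. Then there is `B ⊆ [k]` with `1 ∈ B`, `k ∉ B`, `2 ≤ |B| ≤ k − 1`, such that
`C_B = ∑ i ∈ B, F i` is `f`-minimal and `f` is an indecomposable factor of `C_B`. -/
theorem exists_fMinimal_subcircuit
    {F : Type*} [Field F] {n k : ℕ} [NeZero k] (hk : 3 ≤ k)
    (g : Fin k → Fin n → Polynomial F)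
    (Fp : Fin k → MvPolynomial (Fin n) F)
    (hFp : ∀ i, Fp i = ∏ j : Fin n, toMv j (g i j))
    (hlow : (∑ i, Fp i).totalDegree ≤ n)
    (hzero : ∑ i, Fp i = 0)
    (d : Fin n) (f : Polynomial F) (hf : f.natDegree ≠ 0)
    (hfk : IsIndecompFactor d f (Fp ⟨k - 1, by omega⟩))
    (hf1 : ¬ IsIndecompFactor d f (Fp 0)) :
    ∃ B : Finset (Fin k),
      (0 : Fin k) ∈ B ∧ (⟨k - 1, by omega⟩ : Fin k) ∉ B ∧
      2 ≤ B.card ∧ B.card ≤ k - 1 ∧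
      (∀ A : Finset (Fin k), A.Nonempty → A ⊂ B →
        ¬ IsIndecompFactor d f (∑ i ∈ A, Fp i)) ∧
      IsIndecompFactor d f (∑ i ∈ B, Fp i) := by
  set last : Fin k := ⟨k - 1, by omega⟩ with hlast
  have hlast0 : last ≠ 0 := by
    simp only [hlast, Ne, Fin.ext_iff, Fin.val_zero]
    omega
  set U : Finset (Fin k) := Finset.univ.erase last with hUdef
  have h0U : (0 : Fin k) ∈ U := Finset.mem_erase.mpr ⟨hlast0.symm, Finset.mem_univ _⟩
  have hsumU : ∑ i ∈ U, Fp i = 0 - Fp last := by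
    have : ∑ i ∈ U, Fp i + Fp last = ∑ i, Fp i := by
      rw [hUdef, Finset.sum_erase_add _ _ (Finset.mem_univ last)]
    rw [hzero] at this
    linear_combination this
  have hUfac : IsIndecompFactor d f (∑ i ∈ U, Fp i) := by
    rw [hsumU]; exact indecomp_sub indecomp_zero hfk
  obtain ⟨B, hBU, h0B, h2B, hminB, hfacB⟩ := exists_min_aux Fp d f hf1 U h0U hUfac
  have hUcard : U.card = k - 1 := by
    rw [hUdef, Finset.card_erase_of_mem (Finset.mem_univ _)]
    simp
  refine ⟨B, h0B, fun h => ?_, h2B, by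
    have := Finset.card_le_card hBU; omega, hminB, hfacB⟩
  exact (Finset.mem_erase.mp (hBU h)).1 rfl
end

section
/- Let M ≥ 1 and let C = F_1 + … + F_k be a low degree unmixed ΣΠΣΠ(k) circuit of size s over a field F such that max_i ‖F_i‖ > M. Let a ∈ F^n be a point with F_i(a) ≠ 0 for each i ∈ [k]. Then there exists 0 ≤ t ≤ n−1 such that M < max_i ‖F_i|_{x_1=a_1,…,x_t=a_t}‖ ≤ M·s. -/
open MvPolynomial Finset
open scoped Pointwise

attribute [local instance 10] Classical.propDecidable

lemma toMv_eq_sum {F : Type*} [CommSemiring F] {n : ℕ} (j : Fin n) (f : Polynomial F) :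
    toMv j f = ∑ d ∈ f.support, MvPolynomial.monomial (Finsupp.single j d) (f.coeff d) := by
  rw [toMv, Polynomial.aeval_def, Polynomial.eval₂_eq_sum, Polynomial.sum_def]
  exact Finset.sum_congr rfl fun d _ => by
    rw [MvPolynomial.algebraMap_eq, C_mul_X_pow_eq_monomial]

lemma eval_toMv {F : Type*} [CommSemiring F] {n : ℕ} (a : Fin n → F) (j : Fin n)
    (f : Polynomial F) : MvPolynomial.eval a (toMv j f) = f.eval (a j) := by
  rw [toMv_eq_sum, map_sum, Polynomial.eval_eq_sum, Polynomial.sum_def]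
  exact Finset.sum_congr rfl fun d _ => by
    simp [MvPolynomial.eval_monomial, Finsupp.prod_single_index]

lemma sparsity_toMv_mul {F : Type*} [Field F] {n : ℕ} (i : Fin n) (f : Polynomial F)
    (H : MvPolynomial (Fin n) F) (hH : ∀ m ∈ H.support, m i = 0) :
    sparsity (toMv i f * H) = f.support.card * sparsity H := by
  classical
  set gg : ℕ → MvPolynomial (Fin n) F :=
    fun d => MvPolynomial.monomial (Finsupp.single i d) (f.coeff d) * H with hgg
  have hsupp : ∀ d ∈ f.support,
      (gg d).support = H.support.map (addLeftEmbedding (Finsupp.single i d)) := by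
    intro d hd
    show (MvPolynomial.monomial (Finsupp.single i d) (f.coeff d) * H).support = _
    rw [← single_eq_monomial]
    exact AddMonoidAlgebra.support_coeff_single_mul H (f.coeff d)
      (fun y => by simp [Polynomial.mem_support_iff.mp hd]) _
  have hival : ∀ d ∈ f.support, ∀ m ∈ (gg d).support, m i = d := by
    intro d hd m hm
    rw [hsupp d hd] at hm
    obtain ⟨m', hm', rfl⟩ := Finset.mem_map.mp hm
    simp [addLeftEmbedding_apply, Finsupp.add_apply, hH m' hm']
  have hzero : ∀ d ∉ f.support, gg d = 0 := by
    intro d hd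
    show MvPolynomial.monomial (Finsupp.single i d) (f.coeff d) * H = 0
    simp [Polynomial.notMem_support_iff.mp hd]
  have hdisj : ∀ d1 d2 : ℕ, d1 ≠ d2 → Disjoint (gg d1).support (gg d2).support := by
    intro d1 d2 hne
    by_cases h1 : d1 ∈ f.support
    · by_cases h2 : d2 ∈ f.support
      · rw [Finset.disjoint_left]
        intro m hm1 hm2
        exact hne ((hival d1 h1 m hm1).symm.trans (hival d2 h2 m hm2))
      · simp [hzero d2 h2]
    · simp [hzero d1 h1]
  have : (toMv i f * H).support = f.support.biUnion fun d => (gg d).support := by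
    rw [toMv_eq_sum, Finset.sum_mul]
    simp only [MvPolynomial.support, AddMonoidAlgebra.coeff_sum]
    exact Finsupp.support_sum_eq_biUnion f.support fun d1 d2 h => hdisj d1 d2 h
  rw [sparsity, this, Finset.card_biUnion fun d1 _ d2 _ h => hdisj d1 d2 h]
  rw [Finset.sum_congr rfl fun d hd => by rw [hsupp d hd, Finset.card_map]]
  simp [sparsity, mul_comm]

lemma support_one_mv {F : Type*} [Field F] {n : ℕ} :
    (1 : MvPolynomial (Fin n) F).support = {0} := by
  have h1 : (1 : MvPolynomial (Fin n) F) = MvPolynomial.monomial 0 1 := by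
    rw [MvPolynomial.monomial_zero', MvPolynomial.C_1]
  rw [h1, MvPolynomial.support_monomial, if_neg one_ne_zero]

lemma support_toMv {F : Type*} [CommSemiring F] {n : ℕ} (j : Fin n) (f : Polynomial F) :
    (toMv j f).support = f.support.image fun d => Finsupp.single j d := by
  classical
  have hdisj : ∀ d1 d2 : ℕ, d1 ≠ d2 →
      Disjoint (MvPolynomial.monomial (Finsupp.single j d1) (f.coeff d1)).support
        (MvPolynomial.monomial (Finsupp.single j d2) (f.coeff d2)).support := by
    intro d1 d2 hne
    rw [Finset.disjoint_left]
    intro m hm1 hm2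
    rw [MvPolynomial.support_monomial] at hm1 hm2
    split at hm1
    · simp at hm1
    · split at hm2
      · simp at hm2
      · rw [Finset.mem_singleton] at hm1 hm2
        subst hm1
        exact hne (by simpa using congrArg (fun g : Fin n →₀ ℕ => g j) hm2)
  have hs : (toMv j f).support
      = f.support.biUnion fun d => (MvPolynomial.monomial (Finsupp.single j d) (f.coeff d)).support := by
    rw [toMv_eq_sum]
    simp only [MvPolynomial.support, AddMonoidAlgebra.coeff_sum]
    exact Finsupp.support_sum_eq_biUnion _ hdisj
  rw [hs]
  ext m
  simp only [Finset.mem_biUnion, Finset.mem_image, MvPolynomial.support_monomial]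
  constructor
  · rintro ⟨d, hd, hm⟩
    rw [if_neg (Polynomial.mem_support_iff.mp hd), Finset.mem_singleton] at hm
    exact ⟨d, hd, hm.symm⟩
  · rintro ⟨d, hd, hm⟩
    exact ⟨d, hd, by rw [if_neg (Polynomial.mem_support_iff.mp hd)]; simp [hm]⟩

lemma support_prod_toMv {F : Type*} [Field F] {n : ℕ} (f : Fin n → Polynomial F)
    (B : Finset (Fin n)) :
    ∀ m ∈ (∏ j ∈ B, toMv j (f j)).support, ∀ i ∉ B, m i = 0 := by
  classical
  induction B using Finset.induction_on with
  | empty =>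
    intro m hm i _
    rw [Finset.prod_empty] at hm
    rw [support_one_mv, Finset.mem_singleton] at hm
    simp [hm]
  | insert _ _ hb ih =>
    rename_i b B
    intro m hm i hi
    rw [Finset.prod_insert hb] at hm
    have hmm : m ∈ (toMv b (f b)).support + (∏ x ∈ B, toMv x (f x)).support :=
      MvPolynomial.support_mul _ _ hm
    rw [Finset.mem_add] at hmm
    obtain ⟨m1, hm1, m2, hm2, rfl⟩ := hmm
    have hm1' : m1 ∈ (toMv b (f b)).support := hm1
    have h1 : m1 i = 0 := by
      rw [support_toMv] at hm1'
      obtain ⟨d, _, rfl⟩ := Finset.mem_image.mp hm1'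
      exact Finsupp.single_eq_of_ne fun h => hi (h ▸ Finset.mem_insert_self b B)
    have h2 : m2 i = 0 := ih m2 hm2 i fun h => hi (Finset.mem_insert_of_mem h)
    simp [Finsupp.add_apply, h1, h2]

lemma sparsity_prod_toMv {F : Type*} [Field F] {n : ℕ} (f : Fin n → Polynomial F)
    (B : Finset (Fin n)) :
    sparsity (∏ j ∈ B, toMv j (f j)) = ∏ j ∈ B, (f j).support.card := by
  classical
  induction B using Finset.induction_on with
  | empty => rw [Finset.prod_empty, Finset.prod_empty, sparsity, support_one_mv]; rfl
  | insert _ _ hb ih =>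
    rename_i b B
    rw [Finset.prod_insert hb, Finset.prod_insert hb,
      sparsity_toMv_mul b (f b) _ (fun m hm => support_prod_toMv f B m hm b hb), ih]

lemma sparsity_C_mul {F : Type*} [Field F] {n : ℕ} {c : F} (hc : c ≠ 0)
    (P : MvPolynomial (Fin n) F) : sparsity (MvPolynomial.C c * P) = sparsity P := by
  unfold sparsity
  congr 1
  ext m
  simp [MvPolynomial.mem_support_iff, MvPolynomial.coeff_C_mul, hc]

lemma substPrefix_prod {F : Type*} [Field F] {n : ℕ} (t : ℕ) (a : Fin n → F)
    (f : Fin n → Polynomial F) :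
    substPrefix t a (∏ j : Fin n, toMv j (f j)) =
      MvPolynomial.C (∏ j ∈ Finset.univ.filter fun j : Fin n => (j : ℕ) < t,
          (f j).eval (a j)) *
        ∏ j ∈ Finset.univ.filter fun j : Fin n => ¬ (j : ℕ) < t, toMv j (f j) := by
  classical
  have h1 : ∀ j : Fin n,
      (aeval fun j : Fin n => if (j : ℕ) < t then MvPolynomial.C (a j) else X j) (toMv j (f j))
        = if (j : ℕ) < t then MvPolynomial.C ((f j).eval (a j)) else toMv j (f j) := by
    intro j
    rw [toMv, ← Polynomial.aeval_algHom_apply, aeval_X]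
    split
    · rw [← MvPolynomial.algebraMap_eq,
        Polynomial.aeval_algebraMap_apply_eq_algebraMap_eval, MvPolynomial.algebraMap_eq]
    · rfl
  rw [substPrefix, map_prod, Finset.prod_congr rfl fun j _ => h1 j,
    ← Finset.prod_filter_mul_prod_filter_not Finset.univ (fun j : Fin n => (j : ℕ) < t)]
  congr 1
  · rw [map_prod]
    exact Finset.prod_congr rfl fun j hj => if_pos (Finset.mem_filter.mp hj).2
  · exact Finset.prod_congr rfl fun j hj => if_neg (Finset.mem_filter.mp hj).2


/-- Claim 4.1.1. Let `M ≥ 1` and let `C = F 0 + ⋯ + F (k-1)` be a low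
degree unmixed ΣΠΣΠ(k) circuit of size `s` with `max_i ‖F i‖ > M`. Let `a` be a point
with `F i (a) ≠ 0` for each `i`. Then there is `0 ≤ t ≤ n − 1` with
`M < max_i ‖F i |_{x 1 = a 1, …, x t = a t}‖ ≤ M·s`. -/
theorem exists_prefix_substitution_sparsity
    {F : Type*} [Field F] {n k s M : ℕ} (hM : 1 ≤ M)
    (g : Fin k → Fin n → Polynomial F)
    (hsize : ∀ i j, (g i j).support.card ≤ s)
    (Fp : Fin k → MvPolynomial (Fin n) F)
    (hFp : ∀ i, Fp i = ∏ j : Fin n, toMv j (g i j))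
    (hlow : (∑ i, Fp i).totalDegree ≤ n)
    (hmax : M < Finset.univ.sup fun i => sparsity (Fp i))
    (a : Fin n → F) (ha : ∀ i, MvPolynomial.eval a (Fp i) ≠ 0) :
    ∃ t ≤ n - 1,
      M < (Finset.univ.sup fun i => sparsity (substPrefix t a (Fp i))) ∧
      (Finset.univ.sup fun i => sparsity (substPrefix t a (Fp i))) ≤ M * s := by
  classical
  have hgz : ∀ i j, (g i j).eval (a j) ≠ 0 := by
    intro i j
    have h := ha i
    rw [hFp i, map_prod] at h
    have := Finset.prod_ne_zero_iff.mp h j (Finset.mem_univ j)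
    rwa [eval_toMv] at this
  -- the sparsity formula
  have key : ∀ t (i : Fin k), sparsity (substPrefix t a (Fp i)) =
      ∏ j ∈ Finset.univ.filter fun j : Fin n => ¬ (j : ℕ) < t, (g i j).support.card := by
    intro t i
    rw [hFp i, substPrefix_prod,
      sparsity_C_mul (Finset.prod_ne_zero_iff.mpr fun j _ => hgz i j),
      sparsity_prod_toMv]
  set N : ℕ → ℕ := fun t => Finset.univ.sup fun i => sparsity (substPrefix t a (Fp i)) with hN
  have hN0 : M < N 0 := by
    have heq : ∀ i : Fin k, sparsity (substPrefix 0 a (Fp i)) = sparsity (Fp i) := by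
      intro i
      rw [key 0 i, Finset.filter_true_of_mem (fun j _ => Nat.not_lt_zero _),
        hFp i, sparsity_prod_toMv]
    calc M < Finset.univ.sup fun i => sparsity (Fp i) := hmax
    _ = N 0 := by rw [hN]; exact (Finset.sup_congr rfl fun i _ => (heq i).symm)
  have hNn : N n ≤ M := by
    refine Finset.sup_le fun i _ => ?_
    rw [key n i, Finset.filter_false_of_mem (fun j _ => by simp [j.isLt])]
    simpa using hM
  have hstep : ∀ t, t < n → N t ≤ s * N (t + 1) := by
    intro t ht
    refine Finset.sup_le fun i _ => ?_
    have hins : (Finset.univ.filter fun j : Fin n => ¬ (j : ℕ) < t)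
        = insert (⟨t, ht⟩ : Fin n)
            (Finset.univ.filter fun j : Fin n => ¬ (j : ℕ) < t + 1) := by
      ext j
      simp only [Finset.mem_filter, Finset.mem_univ, true_and, Finset.mem_insert, Fin.ext_iff]
      omega
    have hnot : (⟨t, ht⟩ : Fin n) ∉
        Finset.univ.filter fun j : Fin n => ¬ (j : ℕ) < t + 1 := by
      simp
    rw [key t i, hins, Finset.prod_insert hnot]
    calc (g i ⟨t, ht⟩).support.card *
          ∏ j ∈ Finset.univ.filter fun j : Fin n => ¬ (j : ℕ) < t + 1, (g i j).support.card
        ≤ s * ∏ j ∈ Finset.univ.filter fun j : Fin n => ¬ (j : ℕ) < t + 1,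
            (g i j).support.card :=
          Nat.mul_le_mul_right _ (hsize i _)
      _ = s * sparsity (substPrefix (t + 1) a (Fp i)) := by rw [key (t + 1) i]
      _ ≤ s * N (t + 1) := by
          have hle : sparsity (substPrefix (t + 1) a (Fp i)) ≤ N (t + 1) := by
            simp only [hN]
            exact Finset.le_sup (f := fun i : Fin k => sparsity (substPrefix (t + 1) a (Fp i)))
              (Finset.mem_univ i)
          exact Nat.mul_le_mul_left _ hle
  -- find the threshold
  have hex : ∃ u, N u ≤ M := ⟨n, hNn⟩
  set t0 := Nat.find hex with ht0
  have ht0pos : 1 ≤ t0 := by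
    rcases Nat.eq_zero_or_pos t0 with h | h
    · exact absurd (h ▸ Nat.find_spec hex) (by omega : ¬ N 0 ≤ M)
    · exact h
  have ht0n : t0 ≤ n := Nat.find_min' hex hNn
  have hn1 : 1 ≤ n := le_trans ht0pos ht0n
  refine ⟨t0 - 1, by omega, ?_, ?_⟩
  · show M < N (t0 - 1)
    have := Nat.find_min hex (m := t0 - 1) (by omega)
    omega
  · show N (t0 - 1) ≤ M * s
    have h1 : N (t0 - 1) ≤ s * N t0 := by
      have := hstep (t0 - 1) (by omega)
      rwa [Nat.sub_add_cancel ht0pos] at this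
    have h2 : N t0 ≤ M := Nat.find_spec hex
    calc N (t0 - 1) ≤ s * N t0 := h1
      _ ≤ s * M := Nat.mul_le_mul_left _ h2
      _ = M * s := Nat.mul_comm _ _
end
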